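/- arXiv:1904.03002 — 11 statements merged into one kernel-verified Lean document; each statement's English description precedes it below -/
import Mathlib

section
/- The set 𝔥^{II} of 7×7 real block matrices h(A,z,c) = [[A, σ(z), U(c)],[0, ρ(A), σ(z)^*],[0, 0, −Aᵀ]], where A ranges over 𝔤𝔩(2,ℝ), z over ℝ^4, and c over ℝ, is closed under the matrix commutator, hence forms a Lie subalgebra of 𝔤𝔩(7,ℝ) of dimension 9. -/
open Matrix Real

noncomputable section

/-- σ(z) : 2×3 matrix. -/
def sigM (z : Fin 4 → ℝ) : Matrix (Fin 2) (Fin 3) ℝ :=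
  !![z 1, Real.sqrt 2 * z 2, z 3;
     z 0, Real.sqrt 2 * z 1, z 2]

/-- ρ(A) : 3×3 matrix. -/
def rhoM (A : Matrix (Fin 2) (Fin 2) ℝ) : Matrix (Fin 3) (Fin 3) ℝ :=
  !![A 0 0 - A 1 1, -(Real.sqrt 2) * A 0 1, 0;
     -(Real.sqrt 2) * A 1 0, 0, -(Real.sqrt 2) * A 0 1;
     0, -(Real.sqrt 2) * A 1 0, -(A 0 0) + A 1 1]

/-- h(A,z,c) : the 7×7 block matrix [[A, σ(z), U(c)],[0, ρ(A), σ(z)^*],[0,0,−Aᵀ]]. -/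
def hM (A : Matrix (Fin 2) (Fin 2) ℝ) (z : Fin 4 → ℝ) (c : ℝ) : Matrix (Fin 7) (Fin 7) ℝ :=
  !![A 0 0, A 0 1, z 1, Real.sqrt 2 * z 2, z 3, 0, -c;
     A 1 0, A 1 1, z 0, Real.sqrt 2 * z 1, z 2, c, 0;
     0, 0, A 0 0 - A 1 1, -(Real.sqrt 2) * A 0 1, 0, -(z 3), -(z 2);
     0, 0, -(Real.sqrt 2) * A 1 0, 0, -(Real.sqrt 2) * A 0 1, Real.sqrt 2 * z 2, Real.sqrt 2 * z 1;
     0, 0, 0, -(Real.sqrt 2) * A 1 0, -(A 0 0) + A 1 1, -(z 1), -(z 0);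
     0, 0, 0, 0, 0, -(A 0 0), -(A 1 0);
     0, 0, 0, 0, 0, -(A 0 1), -(A 1 1)]

/-- Gram matrix of g with g(b1,b6)=g(b2,b7)=g(b3,b5)=1, g(b4,b4)=−1. -/
def G1 : Matrix (Fin 7) (Fin 7) ℝ :=
  !![0,0,0,0,0,1,0;
     0,0,0,0,0,0,1;
     0,0,0,0,1,0,0;
     0,0,0,-1,0,0,0;
     0,0,1,0,0,0,0;
     1,0,0,0,0,0,0;
     0,1,0,0,0,0,0]

/-- Gram matrix of ⟨x,y⟩ = 2(x1y6+x6y1+x2y7+x7y2+x3y5+x5y3) − x4y4. -/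
def G2 : Matrix (Fin 7) (Fin 7) ℝ :=
  !![0,0,0,0,0,2,0;
     0,0,0,0,0,0,2;
     0,0,0,0,2,0,0;
     0,0,0,-1,0,0,0;
     0,0,2,0,0,0,0;
     2,0,0,0,0,0,0;
     0,2,0,0,0,0,0]

/-- The 14-parameter family of matrices spanning 𝔤₂*. -/
def Mg (s : Fin 14 → ℝ) : Matrix (Fin 7) (Fin 7) ℝ :=
  !![s 0 + s 3, -(s 9), s 8, Real.sqrt 2 * s 5, -(s 11), 0, -(s 10);
     -(s 7), s 0, s 1, Real.sqrt 2 * s 8, s 5, s 10, 0;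
     s 6, s 2, s 3, Real.sqrt 2 * s 9, 0, s 11, -(s 5);
     Real.sqrt 2 * s 4, Real.sqrt 2 * s 6, Real.sqrt 2 * s 7, 0, Real.sqrt 2 * s 9, Real.sqrt 2 * s 5, Real.sqrt 2 * s 8;
     -(s 13), s 4, 0, Real.sqrt 2 * s 7, -(s 3), -(s 8), -(s 1);
     0, s 12, s 13, Real.sqrt 2 * s 4, -(s 6), -(s 0) - s 3, s 7;
     -(s 12), 0, -(s 4), Real.sqrt 2 * s 6, -(s 2), s 9, -(s 0)]

/-- standard basis vector b_i of ℝ^7. -/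
def bb (i : Fin 7) : Fin 7 → ℝ := Pi.single i 1

/-- determinant of the (i,j,k)-coordinates of X,Y,Z : the value b^i∧b^j∧b^k (X,Y,Z). -/
def d3 (X Y Z : Fin 7 → ℝ) (i j k : Fin 7) : ℝ :=
  Matrix.det !![X i, X j, X k; Y i, Y j, Y k; Z i, Z j, Z k]

/-- The generic 3-form ω = √2(−b^{157}+b^{236}) − b^4∧(b^{16}−b^{27}−b^{35}), as a
function of three vectors. -/
def om (X Y Z : Fin 7 → ℝ) : ℝ :=
  Real.sqrt 2 * (-(d3 X Y Z 0 4 6) + d3 X Y Z 1 2 5)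
    - (d3 X Y Z 3 0 5 - d3 X Y Z 3 1 6 - d3 X Y Z 3 2 4)

/-- the value of α ∧ β ∧ γ (α,β 2-forms, γ a 3-form) on the standard basis of ℝ^7. -/
def wedge223 (α β : (Fin 7 → ℝ) → (Fin 7 → ℝ) → ℝ)
    (γ : (Fin 7 → ℝ) → (Fin 7 → ℝ) → (Fin 7 → ℝ) → ℝ) : ℝ :=
  (1 / 24 : ℝ) * ∑ p : Equiv.Perm (Fin 7),
    ((Equiv.Perm.sign p : ℤ) : ℝ) * α (bb (p 0)) (bb (p 1)) * β (bb (p 2)) (bb (p 3))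
      * γ (bb (p 4)) (bb (p 5)) (bb (p 6))

/-- the matrix of the third symmetric power of the standard representation of 𝔤𝔩(2,ℝ),
in the monomial basis (x³, x²y, xy², y³). -/
def sym3 (A : Matrix (Fin 2) (Fin 2) ℝ) : Matrix (Fin 4) (Fin 4) ℝ :=
  !![3 * A 0 0, A 0 1, 0, 0;
     3 * A 1 0, 2 * A 0 0 + A 1 1, 2 * A 0 1, 0;
     0, 2 * A 1 0, A 0 0 + 2 * A 1 1, 3 * A 0 1;
     0, 0, A 1 0, 3 * A 1 1]

/-- partial derivative in the i-th coordinate direction. -/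
def pd (i : Fin 7) (F : (Fin 7 → ℝ) → ℝ) (x : Fin 7 → ℝ) : ℝ :=
  fderiv ℝ F x (Pi.single i 1)


@[simp] lemma cons_val_five' {α : Type*} {m : ℕ} (x : α) (u : Fin (m+5) → α) :
    Matrix.vecCons x u 5
      = Matrix.vecHead (Matrix.vecTail (Matrix.vecTail (Matrix.vecTail (Matrix.vecTail u)))) := rfl

@[simp] lemma cons_val_six' {α : Type*} {m : ℕ} (x : α) (u : Fin (m+6) → α) :
    Matrix.vecCons x u 6
      = Matrix.vecHead (Matrix.vecTail (Matrix.vecTail (Matrix.vecTail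
          (Matrix.vecTail (Matrix.vecTail u))))) := rfl

lemma ext7 {α : Type*} {X Y : Matrix (Fin 7) (Fin 7) α}
    (h : ∀ i j : Fin 7, X i j = Y i j) : X = Y := by
  ext i j; exact h i j

lemma forall_fin7 {p : Fin 7 → Prop} (h0 : p 0) (h1 : p 1) (h2 : p 2) (h3 : p 3)
    (h4 : p 4) (h5 : p 5) (h6 : p 6) : ∀ i, p i := by
  intro i
  match i with
  | 0 => exact h0
  | 1 => exact h1
  | 2 => exact h2
  | 3 => exact h3
  | 4 => exact h4
  | 5 => exact h5
  | 6 => exact h6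

set_option maxHeartbeats 10000000 in
/-- 𝔥^{II} is closed under the matrix commutator and has dimension 9. -/
theorem stmt_3 :
    (∀ (A : Matrix (Fin 2) (Fin 2) ℝ) (z : Fin 4 → ℝ) (c : ℝ)
       (B : Matrix (Fin 2) (Fin 2) ℝ) (w : Fin 4 → ℝ) (d : ℝ),
      ∃ (C : Matrix (Fin 2) (Fin 2) ℝ) (u : Fin 4 → ℝ) (e : ℝ),
        hM A z c * hM B w d - hM B w d * hM A z c = hM C u e) ∧
    Module.finrank ℝ
      (Submodule.span ℝ {m : Matrix (Fin 7) (Fin 7) ℝ |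
        ∃ (A : Matrix (Fin 2) (Fin 2) ℝ) (z : Fin 4 → ℝ) (c : ℝ), m = hM A z c}) = 9 := by
  constructor
  · intro A z c B w d
    have h2 : Real.sqrt 2 * Real.sqrt 2 = 2 := Real.mul_self_sqrt (by norm_num)
    refine ⟨!![A 0 1 * B 1 0 - A 1 0 * B 0 1,
               A 0 0 * B 0 1 - A 0 1 * B 0 0 + A 0 1 * B 1 1 - A 1 1 * B 0 1;
               -(A 0 0 * B 1 0) + A 1 0 * B 0 0 - A 1 0 * B 1 1 + A 1 1 * B 1 0,
               -(A 0 1 * B 1 0) + A 1 0 * B 0 1],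
      ![-(A 0 0) * w 0 + 3 * A 1 0 * w 1 + 2 * A 1 1 * w 0 + B 0 0 * z 0 - 3 * B 1 0 * z 1 - 2 * B 1 1 * z 0,
        A 0 1 * w 0 + 2 * A 1 0 * w 2 + A 1 1 * w 1 - B 0 1 * z 0 - 2 * B 1 0 * z 2 - B 1 1 * z 1,
        A 0 0 * w 2 + 2 * A 0 1 * w 1 + A 1 0 * w 3 - B 0 0 * z 2 - 2 * B 0 1 * z 1 - B 1 0 * z 3,
        2 * A 0 0 * w 3 + 3 * A 0 1 * w 2 - A 1 1 * w 3 - 2 * B 0 0 * z 3 - 3 * B 0 1 * z 2 + B 1 1 * z 3],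
      A 0 0 * d + A 1 1 * d - B 0 0 * c - B 1 1 * c + w 0 * z 3 - 3 * w 1 * z 2 + 3 * w 2 * z 1 - w 3 * z 0, ?_⟩
    apply ext7
    apply forall_fin7 <;> apply forall_fin7 <;>
      simp only [hM, Matrix.sub_apply, Matrix.mul_apply, Fin.sum_univ_seven, Matrix.cons_val',
        Matrix.cons_val_zero, Matrix.cons_val_one, Matrix.cons_val_two, Matrix.cons_val_three,
        Matrix.cons_val_four, cons_val_five', cons_val_six', Matrix.head_cons, Matrix.tail_cons,
        Matrix.head_fin_const, Matrix.empty_val', Matrix.cons_val_fin_one, Matrix.of_apply,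
        Matrix.vecHead, Matrix.vecTail, Matrix.cons_val_succ, Function.comp, Fin.isValue] <;>
      first
      | ring1
      | linear_combination (A 1 0 * w 2 - B 1 0 * z 2) * h2
      | linear_combination (B 1 0 * z 2 - A 1 0 * w 2) * h2
      | linear_combination (A 0 1 * w 2 - B 0 1 * z 2) * h2
      | linear_combination (B 0 1 * z 2 - A 0 1 * w 2) * h2
      | linear_combination (A 1 0 * w 1 - B 1 0 * z 1) * h2
      | linear_combination (B 1 0 * z 1 - A 1 0 * w 1) * h2
      | linear_combination (A 0 1 * w 1 - B 0 1 * z 1) * h2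
      | linear_combination (B 0 1 * z 1 - A 0 1 * w 1) * h2
      | linear_combination (w 1 * z 2 - w 2 * z 1) * h2
      | linear_combination (w 2 * z 1 - w 1 * z 2) * h2
      | linear_combination (A 0 1 * B 1 0 - A 1 0 * B 0 1) * h2
      | linear_combination (A 1 0 * B 0 1 - A 0 1 * B 1 0) * h2
  · have key : ∀ (A : Matrix (Fin 2) (Fin 2) ℝ) (z : Fin 4 → ℝ) (c : ℝ),
        hM A z c = 0 → A = 0 ∧ z = 0 ∧ c = 0 := by
      intro A z c hx
      have h : ∀ i j, hM A z c i j = 0 := fun i j => congrFun (congrFun hx i) j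
      refine ⟨?_, ?_, ?_⟩
      · ext i j
        fin_cases i <;> fin_cases j
        · simpa [hM] using h 0 0
        · simpa [hM] using h 0 1
        · simpa [hM] using h 1 0
        · simpa [hM] using h 1 1
      · funext i
        fin_cases i
        · simpa [hM] using h 1 2
        · simpa [hM] using h 0 2
        · simpa [hM] using h 1 4
        · simpa [hM] using h 0 4
      · simpa [hM] using h 1 5
    let f : (Matrix (Fin 2) (Fin 2) ℝ × (Fin 4 → ℝ) × ℝ) →ₗ[ℝ] Matrix (Fin 7) (Fin 7) ℝ :=
      { toFun := fun p => hM p.1 p.2.1 p.2.2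
        map_add' := by
          intro p q
          ext i j
          fin_cases i <;> fin_cases j <;>
            simp [hM, Matrix.add_apply, Pi.add_apply, Matrix.vecHead, Matrix.vecTail] <;> ring
        map_smul' := by
          intro r p
          ext i j
          fin_cases i <;> fin_cases j <;>
            simp [hM, Matrix.smul_apply, Pi.smul_apply, smul_eq_mul, Matrix.vecHead,
              Matrix.vecTail] <;> ring }
    have hset : {m : Matrix (Fin 7) (Fin 7) ℝ |
        ∃ (A : Matrix (Fin 2) (Fin 2) ℝ) (z : Fin 4 → ℝ) (c : ℝ), m = hM A z c}
        = Set.range f := by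
      ext m
      constructor
      · rintro ⟨A, z, c, rfl⟩; exact ⟨(A, z, c), rfl⟩
      · rintro ⟨⟨A, z, c⟩, rfl⟩; exact ⟨A, z, c, rfl⟩
    rw [hset, ← LinearMap.coe_range, Submodule.span_eq]
    have hinj : Function.Injective f := by
      rw [← LinearMap.ker_eq_bot, Submodule.eq_bot_iff]
      rintro ⟨A, z, c⟩ hx
      obtain ⟨hA, hz, hc⟩ := key A z c hx
      simp [Prod.ext_iff, hA, hz, hc]
    rw [LinearMap.finrank_range_of_inj hinj]
    simp [Module.finrank_prod, Module.finrank_matrix]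
end
end

section
/- Every matrix h(A,z,c) ∈ 𝔥^{II} is skew-symmetric with respect to the bilinear form g = 2(b^1·b^6 + b^2·b^7 + b^3·b^5) − b^4·b^4 on ℝ^7; that is, g(h(A,z,c) X, Y) + g(X, h(A,z,c) Y) = 0 for all X, Y ∈ ℝ^7. -/
open Matrix Real

noncomputable section

theorem Matrix.IsSkewAdjoint.mulVec_dotProduct_mulVec_add {R n : Type*} [CommRing R] [Fintype n]
    {J M : Matrix n n R} (h : Matrix.IsSkewAdjoint J M) (X Y : n → R) :
    M *ᵥ X ⬝ᵥ J *ᵥ Y + X ⬝ᵥ J *ᵥ (M *ᵥ Y) = 0 := by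
  have hJM : J * M = -(Mᵀ * J) := by
    rw [h, Matrix.mul_neg, neg_neg]
  rw [dotProduct_comm, dotProduct_mulVec, ← mulVec_transpose, mulVec_mulVec, mulVec_mulVec, hJM,
    neg_mulVec, dotProduct_neg, dotProduct_comm, add_neg_cancel]

theorem hM_isSkewAdjoint (A : Matrix (Fin 2) (Fin 2) ℝ) (z : Fin 4 → ℝ) (c : ℝ) :
    Matrix.IsSkewAdjoint G1 (hM A z c) := by
  rw [Matrix.IsSkewAdjoint, Matrix.IsAdjointPair]
  ext i j
  fin_cases i <;> fin_cases j <;> simp [hM, G1, mul_apply, Fin.sum_univ_succ] <;> ring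

/-- every h(A,z,c) is skew-symmetric with respect to g. -/
theorem stmt_4 (A : Matrix (Fin 2) (Fin 2) ℝ) (z : Fin 4 → ℝ) (c : ℝ)
    (X Y : Fin 7 → ℝ) :
    ((hM A z c).mulVec X) ⬝ᵥ G1.mulVec Y + X ⬝ᵥ G1.mulVec ((hM A z c).mulVec Y) = 0 :=
  (hM_isSkewAdjoint A z c).mulVec_dotProduct_mulVec_add X Y
end
end

section
/- For every A ∈ 𝔤𝔩(2,ℝ), z ∈ ℝ^4 and c ∈ ℝ, [h(A,0,0), h(0,z,c)] = h(0, A·z, tr(A)·c), where A·z is the action of 𝔤𝔩(2,ℝ) on ℝ^4 determined by σ(A·z) = A σ(z) − σ(z) ρ(A). In particular the c-component transforms by the trace of A. -/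
open Matrix Real

noncomputable section

lemma cv5a {α : Type*} (x : α) (u : Fin 6 → α) : Matrix.vecCons x u 5 = u 4 := rfl
lemma cv6a {α : Type*} (x : α) (u : Fin 6 → α) : Matrix.vecCons x u 6 = u 5 := rfl
lemma cv5b {α : Type*} (x : α) (u : Fin 5 → α) : Matrix.vecCons x u 5 = u 4 := rfl

set_option maxHeartbeats 2000000 in
/-- [h(A,0,0), h(0,z,c)] = h(0, A·z, tr(A)·c) with σ(A·z)=Aσ(z)−σ(z)ρ(A). -/
theorem stmt_7 (A : Matrix (Fin 2) (Fin 2) ℝ) (z : Fin 4 → ℝ) (c : ℝ) :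
    ∃ w : Fin 4 → ℝ,
      sigM w = A * sigM z - sigM z * rhoM A ∧
      hM A 0 0 * hM 0 z c - hM 0 z c * hM A 0 0 = hM 0 w (A.trace * c) := by
  have h2 : Real.sqrt 2 ^ 2 = 2 := Real.sq_sqrt (by norm_num)
  refine ⟨![(2*A 1 1 - A 0 0)*z 0 + 3*A 1 0*z 1,
            A 0 1*z 0 + A 1 1*z 1 + 2*A 1 0*z 2,
            A 0 0*z 2 + 2*A 0 1*z 1 + A 1 0*z 3,
            (2*A 0 0 - A 1 1)*z 3 + 3*A 0 1*z 2], ?_, ?_⟩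
  · ext i j
    fin_cases i <;> fin_cases j <;>
      simp [sigM, rhoM, Matrix.mul_apply, Matrix.sub_apply, Fin.sum_univ_two,
        Fin.sum_univ_three] <;>
      ring_nf <;> simp only [h2] <;> ring
  · rw [← Matrix.ext_iff]
    simp only [Fin.forall_fin_succ, IsEmpty.forall_iff, and_true,
      Matrix.sub_apply, Matrix.mul_apply, Fin.sum_univ_seven, hM,
      Matrix.trace, Matrix.diag, Fin.sum_univ_two,
      Matrix.of_apply, Matrix.cons_val', Matrix.cons_val_zero, Matrix.cons_val_one,
      Matrix.head_cons, Matrix.head_fin_const, Matrix.cons_val_two, Matrix.cons_val_three,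
      Matrix.cons_val_four, cv5a, cv6a, cv5b, Matrix.cons_val_succ,
      Matrix.empty_val', Matrix.cons_val_fin_one, Matrix.vecHead, Matrix.vecTail,
      Matrix.zero_apply, Pi.zero_apply, Function.comp_apply]
    repeat' apply And.intro
    all_goals ring_nf
    all_goals simp only [h2]
    all_goals ring_nf
end
end

section
/- The representation of 𝔤𝔩(2,ℝ) on ℝ^4 defined by σ(A·z) = A σ(z) − σ(z) ρ(A) is isomorphic to the third symmetric power of the standard 2-dimensional representation tensored with a 1-dimensional representation; in particular, its restriction to 𝔰𝔩(2,ℝ) is irreducible. -/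
open Matrix Real

noncomputable section

/-- explicit formula for the action. -/
def actF (A : Matrix (Fin 2) (Fin 2) ℝ) (z : Fin 4 → ℝ) : Fin 4 → ℝ :=
  ![(2*A 1 1 - A 0 0)*z 0 + 3*A 1 0*z 1,
    A 0 1*z 0 + A 1 1*z 1 + 2*A 1 0*z 2,
    2*A 0 1*z 1 + A 0 0*z 2 + A 1 0*z 3,
    3*A 0 1*z 2 + (2*A 0 0 - A 1 1)*z 3]

lemma s2s2 : Real.sqrt 2 * Real.sqrt 2 = 2 := Real.mul_self_sqrt (by norm_num)

lemma act_eq (act : Matrix (Fin 2) (Fin 2) ℝ → (Fin 4 → ℝ) → (Fin 4 → ℝ))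
    (hact : ∀ A z, sigM (act A z) = A * sigM z - sigM z * rhoM A) :
    ∀ A z, act A z = actF A z := by
  intro A z
  have h := hact A z
  have h0 := congrFun (congrFun h 1) 0
  have h1 := congrFun (congrFun h 0) 0
  have h2 := congrFun (congrFun h 1) 2
  have h3 := congrFun (congrFun h 0) 2
  simp [sigM, rhoM, Matrix.mul_apply, Fin.sum_univ_succ, Matrix.sub_apply] at h0 h1 h2 h3
  have e0 : act A z 0 = actF A z 0 := by
    rw [h0]; simp [actF]; linear_combination (A 1 0 * z 1) * s2s2
  have e1 : act A z 1 = actF A z 1 := by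
    rw [h1]; simp [actF]; linear_combination (A 1 0 * z 2) * s2s2
  have e2 : act A z 2 = actF A z 2 := by
    rw [h2]; simp [actF]; linear_combination (A 0 1 * z 1) * s2s2
  have e3 : act A z 3 = actF A z 3 := by
    rw [h3]; simp [actF]; linear_combination (A 0 1 * z 2) * s2s2
  funext i
  fin_cases i
  exacts [e0, e1, e2, e3]

def Tfun (z : Fin 4 → ℝ) : Fin 4 → ℝ := ![z 3, 3*z 2, 3*z 1, z 0]
def Tinvfun (z : Fin 4 → ℝ) : Fin 4 → ℝ := ![z 3, z 2/3, z 1/3, z 0]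

def Teq : (Fin 4 → ℝ) ≃ₗ[ℝ] (Fin 4 → ℝ) where
  toFun := Tfun
  invFun := Tinvfun
  map_add' := by intro x y; funext i; fin_cases i <;> simp [Tfun] <;> ring
  map_smul' := by intro c x; funext i; fin_cases i <;> simp [Tfun] <;> ring
  left_inv := by intro x; funext i; fin_cases i <;> simp [Tfun, Tinvfun] <;> ring
  right_inv := by intro x; funext i; fin_cases i <;> simp [Tfun, Tinvfun] <;> ring

def chiL : Matrix (Fin 2) (Fin 2) ℝ →ₗ[ℝ] ℝ where
  toFun A := -(A 0 0 + A 1 1)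
  map_add' := by intro x y; simp [Matrix.add_apply]; ring
  map_smul' := by intro c x; simp [Matrix.smul_apply]; ring

lemma Tsym : ∀ (A : Matrix (Fin 2) (Fin 2) ℝ) (z : Fin 4 → ℝ),
    Teq (actF A z) = (sym3 A).mulVec (Teq z) + chiL A • Teq z := by
  intro A z
  funext i
  fin_cases i <;>
    simp [Teq, Tfun, actF, sym3, chiL, Matrix.mulVec, dotProduct,
      Fin.sum_univ_succ] <;> ring

lemma part2 (W : Submodule ℝ (Fin 4 → ℝ))
    (hW : ∀ A : Matrix (Fin 2) (Fin 2) ℝ, A.trace = 0 → ∀ z ∈ W, actF A z ∈ W) :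
    W = ⊥ ∨ W = ⊤ := by
  by_cases hb : W = ⊥
  · exact Or.inl hb
  right
  obtain ⟨z, hz, hz0⟩ := Submodule.exists_mem_ne_zero_of_ne_bot hb
  have hE : ∀ v ∈ W, (![0, v 0, 2*v 1, 3*v 2] : Fin 4 → ℝ) ∈ W := by
    intro v hv
    have h := hW !![0,1;0,0] (by simp [Matrix.trace_fin_two]) v hv
    have e : actF !![0,1;0,0] v = ![0, v 0, 2*v 1, 3*v 2] := by
      funext i; fin_cases i <;> simp [actF] <;> ring
    rwa [e] at h
  have hF : ∀ v ∈ W, (![3*v 1, 2*v 2, v 3, 0] : Fin 4 → ℝ) ∈ W := by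
    intro v hv
    have h := hW !![0,0;1,0] (by simp [Matrix.trace_fin_two]) v hv
    have e : actF !![0,0;1,0] v = ![3*v 1, 2*v 2, v 3, 0] := by
      funext i; fin_cases i <;> simp [actF] <;> ring
    rwa [e] at h
  -- from any (0,0,0,c) with c ≠ 0 in W, get e3
  have scale : ∀ c : ℝ, c ≠ 0 → (![0,0,0,c] : Fin 4 → ℝ) ∈ W →
      (![0,0,0,1] : Fin 4 → ℝ) ∈ W := by
    intro c hc hm
    have h := W.smul_mem c⁻¹ hm
    have e : c⁻¹ • (![0,0,0,c] : Fin 4 → ℝ) = ![0,0,0,1] := by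
      funext i; fin_cases i <;> simp <;> field_simp
    rwa [e] at h
  have he3 : (![0,0,0,1] : Fin 4 → ℝ) ∈ W := by
    by_cases h0 : z 0 = 0
    · by_cases h1 : z 1 = 0
      · by_cases h2 : z 2 = 0
        · have h3 : z 3 ≠ 0 := by
            intro h3
            exact hz0 (by funext i; fin_cases i <;> simp [h0, h1, h2, h3])
          refine scale (z 3) h3 ?_
          have e : (![0,0,0,z 3] : Fin 4 → ℝ) = z := by
            funext i; fin_cases i <;> simp [h0, h1, h2]
          rwa [e]
        · refine scale (3 * z 2) (by simpa using h2) ?_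
          have h := hE z hz
          have e : (![0, z 0, 2*z 1, 3*z 2] : Fin 4 → ℝ) = ![0,0,0,3*z 2] := by
            funext i; fin_cases i <;> simp [h0, h1]
          rwa [e] at h
      · refine scale (6 * z 1) (by simpa using h1) ?_
        have h := hE _ (hE z hz)
        have e : (![0, (![0, z 0, 2*z 1, 3*z 2] : Fin 4 → ℝ) 0,
            2*(![0, z 0, 2*z 1, 3*z 2] : Fin 4 → ℝ) 1,
            3*(![0, z 0, 2*z 1, 3*z 2] : Fin 4 → ℝ) 2] : Fin 4 → ℝ)
            = ![0,0,0,6*z 1] := by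
          funext i; fin_cases i <;> simp [h0] <;> ring
        rwa [e] at h
    · refine scale (6 * z 0) (by simpa using h0) ?_
      have h := hE _ (hE _ (hE z hz))
      have e : (![0, (![0, (![0, z 0, 2*z 1, 3*z 2] : Fin 4 → ℝ) 0,
          2*(![0, z 0, 2*z 1, 3*z 2] : Fin 4 → ℝ) 1,
          3*(![0, z 0, 2*z 1, 3*z 2] : Fin 4 → ℝ) 2] : Fin 4 → ℝ) 0,
          2*(![0, (![0, z 0, 2*z 1, 3*z 2] : Fin 4 → ℝ) 0,
          2*(![0, z 0, 2*z 1, 3*z 2] : Fin 4 → ℝ) 1,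
          3*(![0, z 0, 2*z 1, 3*z 2] : Fin 4 → ℝ) 2] : Fin 4 → ℝ) 1,
          3*(![0, (![0, z 0, 2*z 1, 3*z 2] : Fin 4 → ℝ) 0,
          2*(![0, z 0, 2*z 1, 3*z 2] : Fin 4 → ℝ) 1,
          3*(![0, z 0, 2*z 1, 3*z 2] : Fin 4 → ℝ) 2] : Fin 4 → ℝ) 2] : Fin 4 → ℝ)
          = ![0,0,0,6*z 0] := by
        funext i; fin_cases i <;> simp <;> ring
      rwa [e] at h
  have he2 : (![0,0,1,0] : Fin 4 → ℝ) ∈ W := by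
    have h := hF _ he3
    have e : (![3*(![0,0,0,1] : Fin 4 → ℝ) 1, 2*(![0,0,0,1] : Fin 4 → ℝ) 2,
        (![0,0,0,1] : Fin 4 → ℝ) 3, 0] : Fin 4 → ℝ) = ![0,0,1,0] := by
      funext i; fin_cases i <;> simp
    rwa [e] at h
  have he1 : (![0,1,0,0] : Fin 4 → ℝ) ∈ W := by
    have h := hF _ he2
    have h2 := W.smul_mem (2:ℝ)⁻¹ h
    have e : (2:ℝ)⁻¹ • (![3*(![0,0,1,0] : Fin 4 → ℝ) 1, 2*(![0,0,1,0] : Fin 4 → ℝ) 2,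
        (![0,0,1,0] : Fin 4 → ℝ) 3, 0] : Fin 4 → ℝ) = ![0,1,0,0] := by
      funext i; fin_cases i <;> simp <;> norm_num
    rwa [e] at h2
  have he0 : (![1,0,0,0] : Fin 4 → ℝ) ∈ W := by
    have h := hF _ he1
    have h2 := W.smul_mem (3:ℝ)⁻¹ h
    have e : (3:ℝ)⁻¹ • (![3*(![0,1,0,0] : Fin 4 → ℝ) 1, 2*(![0,1,0,0] : Fin 4 → ℝ) 2,
        (![0,1,0,0] : Fin 4 → ℝ) 3, 0] : Fin 4 → ℝ) = ![1,0,0,0] := by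
      funext i; fin_cases i <;> simp <;> norm_num
    rwa [e] at h2
  rw [eq_top_iff]
  intro v _
  have e : v = v 0 • (![1,0,0,0] : Fin 4 → ℝ) + v 1 • ![0,1,0,0]
      + v 2 • ![0,0,1,0] + v 3 • ![0,0,0,1] := by
    funext i; fin_cases i <;> simp
  rw [e]
  exact W.add_mem (W.add_mem (W.add_mem (W.smul_mem _ he0) (W.smul_mem _ he1))
    (W.smul_mem _ he2)) (W.smul_mem _ he3)

/-- the representation of 𝔤𝔩(2,ℝ) on ℝ⁴ given by σ(A·z)=Aσ(z)−σ(z)ρ(A) is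
isomorphic to Sym³ of the standard representation twisted by a 1-dimensional
representation, and its restriction to 𝔰𝔩(2,ℝ) is irreducible. -/
theorem stmt_8 (act : Matrix (Fin 2) (Fin 2) ℝ → (Fin 4 → ℝ) → (Fin 4 → ℝ))
    (hact : ∀ A z, sigM (act A z) = A * sigM z - sigM z * rhoM A) :
    (∃ T : (Fin 4 → ℝ) ≃ₗ[ℝ] (Fin 4 → ℝ), ∃ χ : Matrix (Fin 2) (Fin 2) ℝ →ₗ[ℝ] ℝ,
      ∀ A z, T (act A z) = (sym3 A).mulVec (T z) + χ A • T z) ∧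
    (∀ W : Submodule ℝ (Fin 4 → ℝ),
      (∀ A : Matrix (Fin 2) (Fin 2) ℝ, A.trace = 0 → ∀ z ∈ W, act A z ∈ W) →
      W = ⊥ ∨ W = ⊤) := by
  have ae := act_eq act hact
  constructor
  · refine ⟨Teq, chiL, ?_⟩
    intro A z
    rw [ae]
    exact Tsym A z
  · intro W hW
    apply part2
    intro A hA v hv
    have h := hW A hA v hv
    rwa [ae] at h
end
end

section
/- The subspaces Z_1 = {h(0,(z_1,0,z_1,z_4),c)}, Z_2 = {h(0,(0,z_2,z_3,−z_2),c)}, and Z_5(κ) = {h(0,(z_1,z_2,κz_1,z_4),c)} for κ = ±1 are Lie subalgebras of 𝔥^{II} (with parameters ranging over ℝ); moreover each contains the center {h(0,0,c) : c ∈ ℝ} of 𝔫. -/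
open Matrix Real

noncomputable section

def Z1set : Set (Matrix (Fin 7) (Fin 7) ℝ) :=
  {m | ∃ z1 z4 c : ℝ, m = hM 0 ![z1, 0, z1, z4] c}

def Z2set : Set (Matrix (Fin 7) (Fin 7) ℝ) :=
  {m | ∃ z2 z3 c : ℝ, m = hM 0 ![0, z2, z3, -z2] c}

def Z5set (κ : ℝ) : Set (Matrix (Fin 7) (Fin 7) ℝ) :=
  {m | ∃ z1 z2 z4 c : ℝ, m = hM 0 ![z1, z2, κ * z1, z4] c}

section AuxVec
open Matrix
variable {α : Type*}
@[simp] lemma cons7_2 (a : α) (u : Fin 6 → α) : vecCons a u (2:Fin 7) = u 1 := rfl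
@[simp] lemma cons7_3 (a : α) (u : Fin 6 → α) : vecCons a u (3:Fin 7) = u 2 := rfl
@[simp] lemma cons7_4 (a : α) (u : Fin 6 → α) : vecCons a u (4:Fin 7) = u 3 := rfl
@[simp] lemma cons7_5 (a : α) (u : Fin 6 → α) : vecCons a u (5:Fin 7) = u 4 := rfl
@[simp] lemma cons7_6 (a : α) (u : Fin 6 → α) : vecCons a u (6:Fin 7) = u 5 := rfl
@[simp] lemma cons6_2 (a : α) (u : Fin 5 → α) : vecCons a u (2:Fin 6) = u 1 := rfl
@[simp] lemma cons6_3 (a : α) (u : Fin 5 → α) : vecCons a u (3:Fin 6) = u 2 := rfl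
@[simp] lemma cons6_4 (a : α) (u : Fin 5 → α) : vecCons a u (4:Fin 6) = u 3 := rfl
@[simp] lemma cons6_5 (a : α) (u : Fin 5 → α) : vecCons a u (5:Fin 6) = u 4 := rfl
@[simp] lemma cons5_2 (a : α) (u : Fin 4 → α) : vecCons a u (2:Fin 5) = u 1 := rfl
@[simp] lemma cons5_3 (a : α) (u : Fin 4 → α) : vecCons a u (3:Fin 5) = u 2 := rfl
@[simp] lemma cons5_4 (a : α) (u : Fin 4 → α) : vecCons a u (4:Fin 5) = u 3 := rfl
@[simp] lemma cons4_2 (a : α) (u : Fin 3 → α) : vecCons a u (2:Fin 4) = u 1 := rfl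
@[simp] lemma cons4_3 (a : α) (u : Fin 3 → α) : vecCons a u (3:Fin 4) = u 2 := rfl
@[simp] lemma cons3_2 (a : α) (u : Fin 2 → α) : vecCons a u (2:Fin 3) = u 1 := rfl
end AuxVec

set_option maxHeartbeats 1000000 in
lemma hM_add' (a1 a2 a3 a4 b1 b2 b3 b4 c c' : ℝ) :
    hM 0 ![a1,a2,a3,a4] c + hM 0 ![b1,b2,b3,b4] c' =
    hM 0 ![a1+b1,a2+b2,a3+b3,a4+b4] (c+c') := by
  ext i j
  fin_cases i <;> fin_cases j <;> simp [hM, Matrix.vecHead, Matrix.vecTail] <;> ring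

set_option maxHeartbeats 1000000 in
lemma hM_smul' (r a1 a2 a3 a4 c : ℝ) :
    r • hM 0 ![a1,a2,a3,a4] c = hM 0 ![r*a1,r*a2,r*a3,r*a4] (r*c) := by
  ext i j
  fin_cases i <;> fin_cases j <;> simp [hM, Matrix.vecHead, Matrix.vecTail] <;> ring

set_option maxHeartbeats 4000000 in
lemma hM_brk' (a1 a2 a3 a4 b1 b2 b3 b4 c c' : ℝ) :
    hM 0 ![a1,a2,a3,a4] c * hM 0 ![b1,b2,b3,b4] c' -
      hM 0 ![b1,b2,b3,b4] c' * hM 0 ![a1,a2,a3,a4] c =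
    hM 0 ![0,0,0,0] (-a1*b4 + a4*b1 + 3*(a2*b3 - a3*b2)) := by
  have h2 : Real.sqrt 2 * Real.sqrt 2 = 2 := Real.mul_self_sqrt (by norm_num)
  ext i j
  fin_cases i <;> fin_cases j <;>
    simp [hM, Matrix.vecHead, Matrix.vecTail, Matrix.mul_apply, Fin.sum_univ_seven] <;>
    first
      | linear_combination (a3 * b2 - a2 * b3) * h2
      | linear_combination (a2 * b3 - a3 * b2) * h2
      | nlinarith [h2]

set_option maxHeartbeats 1000000 in
lemma hM_zero (c : ℝ) : hM 0 0 c = hM 0 ![0,0,0,0] c := by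
  ext i j
  fin_cases i <;> fin_cases j <;> simp [hM, Matrix.vecHead, Matrix.vecTail]

/-- Z₁, Z₂ and Z₅(κ) (κ = ±1) are Lie subalgebras of 𝔥^{II}, each
containing the center {h(0,0,c)} of 𝔫. -/
theorem stmt_9 (κ : ℝ) (hκ : κ = 1 ∨ κ = -1) :
    ((∀ x ∈ Z1set, ∀ y ∈ Z1set, x + y ∈ Z1set) ∧
     (∀ (r : ℝ), ∀ x ∈ Z1set, r • x ∈ Z1set) ∧
     (∀ x ∈ Z1set, ∀ y ∈ Z1set, x * y - y * x ∈ Z1set) ∧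
     (∀ c : ℝ, hM 0 0 c ∈ Z1set)) ∧
    ((∀ x ∈ Z2set, ∀ y ∈ Z2set, x + y ∈ Z2set) ∧
     (∀ (r : ℝ), ∀ x ∈ Z2set, r • x ∈ Z2set) ∧
     (∀ x ∈ Z2set, ∀ y ∈ Z2set, x * y - y * x ∈ Z2set) ∧
     (∀ c : ℝ, hM 0 0 c ∈ Z2set)) ∧
    ((∀ x ∈ Z5set κ, ∀ y ∈ Z5set κ, x + y ∈ Z5set κ) ∧
     (∀ (r : ℝ), ∀ x ∈ Z5set κ, r • x ∈ Z5set κ) ∧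
     (∀ x ∈ Z5set κ, ∀ y ∈ Z5set κ, x * y - y * x ∈ Z5set κ) ∧
     (∀ c : ℝ, hM 0 0 c ∈ Z5set κ)) := by
  
  refine ⟨⟨?_, ?_, ?_, ?_⟩, ⟨?_, ?_, ?_, ?_⟩, ?_, ?_, ?_, ?_⟩
  · rintro x ⟨z1, z4, c, rfl⟩ y ⟨w1, w4, c', rfl⟩
    rw [hM_add']
    exact ⟨z1 + w1, z4 + w4, c + c', by norm_num⟩
  · rintro r x ⟨z1, z4, c, rfl⟩
    rw [hM_smul']
    exact ⟨r * z1, r * z4, r * c, by norm_num⟩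
  · rintro x ⟨z1, z4, c, rfl⟩ y ⟨w1, w4, c', rfl⟩
    rw [hM_brk']
    exact ⟨0, 0, -z1 * w4 + z4 * w1 + 3 * (0 * w1 - z1 * 0), rfl⟩
  · intro c
    exact ⟨0, 0, c, by rw [hM_zero]⟩
  · rintro x ⟨z2, z3, c, rfl⟩ y ⟨w2, w3, c', rfl⟩
    rw [hM_add']
    exact ⟨z2 + w2, z3 + w3, c + c',
      by rw [show -z2 + -w2 = -(z2 + w2) by ring, show (0:ℝ) + 0 = 0 by ring]⟩
  · rintro r x ⟨z2, z3, c, rfl⟩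
    rw [hM_smul']
    exact ⟨r * z2, r * z3, r * c,
      by rw [show r * -z2 = -(r * z2) by ring, show r * (0:ℝ) = 0 by ring]⟩
  · rintro x ⟨z2, z3, c, rfl⟩ y ⟨w2, w3, c', rfl⟩
    rw [hM_brk']
    exact ⟨0, 0, -0 * -w2 + -z2 * 0 + 3 * (z2 * w3 - z3 * w2),
      by rw [show -(0:ℝ) = 0 by ring]⟩
  · intro c
    exact ⟨0, 0, c, by rw [hM_zero, show -(0:ℝ) = 0 by ring]⟩
  · rintro x ⟨z1, z2, z4, c, rfl⟩ y ⟨w1, w2, w4, c', rfl⟩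
    rw [hM_add']
    exact ⟨z1 + w1, z2 + w2, z4 + w4, c + c',
      by rw [show κ * z1 + κ * w1 = κ * (z1 + w1) by ring]⟩
  · rintro r x ⟨z1, z2, z4, c, rfl⟩
    rw [hM_smul']
    exact ⟨r * z1, r * z2, r * z4, r * c,
      by rw [show r * (κ * z1) = κ * (r * z1) by ring]⟩
  · rintro x ⟨z1, z2, z4, c, rfl⟩ y ⟨w1, w2, w4, c', rfl⟩
    rw [hM_brk']
    exact ⟨0, 0, 0, -z1 * w4 + z4 * w1 + 3 * (z2 * (κ * w1) - κ * z1 * w2),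
      by rw [show κ * (0:ℝ) = 0 by ring]⟩
  · intro c
    exact ⟨0, 0, 0, c, by rw [hM_zero, show κ * (0:ℝ) = 0 by ring]⟩
end
end

section
/- Every element of 𝔥^{II} = {h(A,z,c)} annihilates the 3-form ω = √2(−b^{157} + b^{236}) − b^4 ∧ (b^{16} − b^{27} − b^{35}); i.e., for every A ∈ 𝔤𝔩(2,ℝ), z ∈ ℝ^4, c ∈ ℝ, the natural action of the endomorphism h(A,z,c) on Λ^3(ℝ^7)^* (by the negative of the dual derivation action) sends ω to 0. Consequently 𝔥^{II} is contained in the Lie algebra 𝔤_2^* of the stabilizer of ω. -/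
set_option maxHeartbeats 1600000
set_option maxRecDepth 20000


open Matrix Real

noncomputable section

section aux3
variable {α : Type*} (x0 x1 x2 : α)
lemma v3_0 : ![x0,x1,x2] (0:Fin 3) = x0 := rfl
lemma v3_1 : ![x0,x1,x2] (1:Fin 3) = x1 := rfl
lemma v3_2 : ![x0,x1,x2] (2:Fin 3) = x2 := rfl
end aux3

section aux7
variable {α : Type*} (x0 x1 x2 x3 x4 x5 x6 : α)
lemma v7_0 : ![x0,x1,x2,x3,x4,x5,x6] (0:Fin 7) = x0 := rfl
lemma v7_1 : ![x0,x1,x2,x3,x4,x5,x6] (1:Fin 7) = x1 := rfl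
lemma v7_2 : ![x0,x1,x2,x3,x4,x5,x6] (2:Fin 7) = x2 := rfl
lemma v7_3 : ![x0,x1,x2,x3,x4,x5,x6] (3:Fin 7) = x3 := rfl
lemma v7_4 : ![x0,x1,x2,x3,x4,x5,x6] (4:Fin 7) = x4 := rfl
lemma v7_5 : ![x0,x1,x2,x3,x4,x5,x6] (5:Fin 7) = x5 := rfl
lemma v7_6 : ![x0,x1,x2,x3,x4,x5,x6] (6:Fin 7) = x6 := rfl
end aux7

/-- every element of 𝔥^{II} annihilates the 3-form ω, i.e. 𝔥^{II} ⊂ 𝔤₂*. -/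
theorem stmt_11 (A : Matrix (Fin 2) (Fin 2) ℝ) (z : Fin 4 → ℝ) (c : ℝ)
    (X Y Z : Fin 7 → ℝ) :
    om ((hM A z c).mulVec X) Y Z + om X ((hM A z c).mulVec Y) Z
      + om X Y ((hM A z c).mulVec Z) = 0 := by
  have hs : Real.sqrt 2 * Real.sqrt 2 = 2 := Real.mul_self_sqrt (by norm_num)
  simp only [om, d3, hM, Matrix.mulVec, dotProduct, Fin.sum_univ_seven,
    Matrix.det_fin_three, Matrix.of_apply, v3_0, v3_1, v3_2, v7_0, v7_1, v7_2, v7_3, v7_4, v7_5, v7_6]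
  linear_combination ((-1 : ℝ) * (A 0 1) * (X 1) * (Y 3) * (Z 5) + (A 0 1) * (X 1) * (Y 5) * (Z 3) + (A 0 1) * (X 3) * (Y 1) * (Z 5) + (-1 : ℝ) * (A 0 1) * (X 3) * (Y 5) * (Z 1) + (-1 : ℝ) * (A 0 1) * (X 5) * (Y 1) * (Z 3) + (A 0 1) * (X 5) * (Y 3) * (Z 1) + (A 1 0) * (X 0) * (Y 3) * (Z 6) + (-1 : ℝ) * (A 1 0) * (X 0) * (Y 6) * (Z 3) + (-1 : ℝ) * (A 1 0) * (X 3) * (Y 0) * (Z 6) + (A 1 0) * (X 3) * (Y 6) * (Z 0) + (A 1 0) * (X 6) * (Y 0) * (Z 3) + (-1 : ℝ) * (A 1 0) * (X 6) * (Y 3) * (Z 0) + (-1 : ℝ) * (X 2) * (Y 3) * (Z 5) * (z 1) + (X 2) * (Y 5) * (Z 3) * (z 1) + (X 3) * (Y 2) * (Z 5) * (z 1) + (-1 : ℝ) * (X 3) * (Y 4) * (Z 6) * (z 2) + (-1 : ℝ) * (X 3) * (Y 5) * (Z 2) * (z 1) + (X 3) * (Y 6) * (Z 4) * (z 2) + (X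 4) * (Y 3) * (Z 6) * (z 2) + (-1 : ℝ) * (X 4) * (Y 6) * (Z 3) * (z 2) + (-1 : ℝ) * (X 5) * (Y 2) * (Z 3) * (z 1) + (X 5) * (Y 3) * (Z 2) * (z 1) + (-1 : ℝ) * (X 6) * (Y 3) * (Z 4) * (z 2) + (X 6) * (Y 4) * (Z 3) * (z 2)) * hs
end
end

section
/- The Lie algebra 𝔤 of 7×7 matrices of the form given by parameters s_1,…,s_14 (as in equation (2) of the paper) is 14-dimensional, closed under commutators, and every element is skew-symmetric with respect to the bilinear form g = 2(b^1·b^6 + b^2·b^7 + b^3·b^5) − b^4·b^4; hence 𝔤 ⊂ 𝔰𝔬(4,3). -/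
open Matrix Real

noncomputable section

section CV
variable {α : Type*}
theorem cv_2_1 (a : α) (f : Fin 1 → α) : Matrix.vecCons a f (1 : Fin 2) = f 0 := rfl
theorem cv_3_1 (a : α) (f : Fin 2 → α) : Matrix.vecCons a f (1 : Fin 3) = f 0 := rfl
theorem cv_3_2 (a : α) (f : Fin 2 → α) : Matrix.vecCons a f (2 : Fin 3) = f 1 := rfl
theorem cv_4_1 (a : α) (f : Fin 3 → α) : Matrix.vecCons a f (1 : Fin 4) = f 0 := rfl
theorem cv_4_2 (a : α) (f : Fin 3 → α) : Matrix.vecCons a f (2 : Fin 4) = f 1 := rfl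
theorem cv_4_3 (a : α) (f : Fin 3 → α) : Matrix.vecCons a f (3 : Fin 4) = f 2 := rfl
theorem cv_5_1 (a : α) (f : Fin 4 → α) : Matrix.vecCons a f (1 : Fin 5) = f 0 := rfl
theorem cv_5_2 (a : α) (f : Fin 4 → α) : Matrix.vecCons a f (2 : Fin 5) = f 1 := rfl
theorem cv_5_3 (a : α) (f : Fin 4 → α) : Matrix.vecCons a f (3 : Fin 5) = f 2 := rfl
theorem cv_5_4 (a : α) (f : Fin 4 → α) : Matrix.vecCons a f (4 : Fin 5) = f 3 := rfl
theorem cv_6_1 (a : α) (f : Fin 5 → α) : Matrix.vecCons a f (1 : Fin 6) = f 0 := rfl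
theorem cv_6_2 (a : α) (f : Fin 5 → α) : Matrix.vecCons a f (2 : Fin 6) = f 1 := rfl
theorem cv_6_3 (a : α) (f : Fin 5 → α) : Matrix.vecCons a f (3 : Fin 6) = f 2 := rfl
theorem cv_6_4 (a : α) (f : Fin 5 → α) : Matrix.vecCons a f (4 : Fin 6) = f 3 := rfl
theorem cv_6_5 (a : α) (f : Fin 5 → α) : Matrix.vecCons a f (5 : Fin 6) = f 4 := rfl
theorem cv_7_1 (a : α) (f : Fin 6 → α) : Matrix.vecCons a f (1 : Fin 7) = f 0 := rfl
theorem cv_7_2 (a : α) (f : Fin 6 → α) : Matrix.vecCons a f (2 : Fin 7) = f 1 := rfl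
theorem cv_7_3 (a : α) (f : Fin 6 → α) : Matrix.vecCons a f (3 : Fin 7) = f 2 := rfl
theorem cv_7_4 (a : α) (f : Fin 6 → α) : Matrix.vecCons a f (4 : Fin 7) = f 3 := rfl
theorem cv_7_5 (a : α) (f : Fin 6 → α) : Matrix.vecCons a f (5 : Fin 7) = f 4 := rfl
theorem cv_7_6 (a : α) (f : Fin 6 → α) : Matrix.vecCons a f (6 : Fin 7) = f 5 := rfl
theorem cv_8_1 (a : α) (f : Fin 7 → α) : Matrix.vecCons a f (1 : Fin 8) = f 0 := rfl
theorem cv_8_2 (a : α) (f : Fin 7 → α) : Matrix.vecCons a f (2 : Fin 8) = f 1 := rfl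
theorem cv_8_3 (a : α) (f : Fin 7 → α) : Matrix.vecCons a f (3 : Fin 8) = f 2 := rfl
theorem cv_8_4 (a : α) (f : Fin 7 → α) : Matrix.vecCons a f (4 : Fin 8) = f 3 := rfl
theorem cv_8_5 (a : α) (f : Fin 7 → α) : Matrix.vecCons a f (5 : Fin 8) = f 4 := rfl
theorem cv_8_6 (a : α) (f : Fin 7 → α) : Matrix.vecCons a f (6 : Fin 8) = f 5 := rfl
theorem cv_8_7 (a : α) (f : Fin 7 → α) : Matrix.vecCons a f (7 : Fin 8) = f 6 := rfl
theorem cv_9_1 (a : α) (f : Fin 8 → α) : Matrix.vecCons a f (1 : Fin 9) = f 0 := rfl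
theorem cv_9_2 (a : α) (f : Fin 8 → α) : Matrix.vecCons a f (2 : Fin 9) = f 1 := rfl
theorem cv_9_3 (a : α) (f : Fin 8 → α) : Matrix.vecCons a f (3 : Fin 9) = f 2 := rfl
theorem cv_9_4 (a : α) (f : Fin 8 → α) : Matrix.vecCons a f (4 : Fin 9) = f 3 := rfl
theorem cv_9_5 (a : α) (f : Fin 8 → α) : Matrix.vecCons a f (5 : Fin 9) = f 4 := rfl
theorem cv_9_6 (a : α) (f : Fin 8 → α) : Matrix.vecCons a f (6 : Fin 9) = f 5 := rfl
theorem cv_9_7 (a : α) (f : Fin 8 → α) : Matrix.vecCons a f (7 : Fin 9) = f 6 := rfl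
theorem cv_9_8 (a : α) (f : Fin 8 → α) : Matrix.vecCons a f (8 : Fin 9) = f 7 := rfl
theorem cv_10_1 (a : α) (f : Fin 9 → α) : Matrix.vecCons a f (1 : Fin 10) = f 0 := rfl
theorem cv_10_2 (a : α) (f : Fin 9 → α) : Matrix.vecCons a f (2 : Fin 10) = f 1 := rfl
theorem cv_10_3 (a : α) (f : Fin 9 → α) : Matrix.vecCons a f (3 : Fin 10) = f 2 := rfl
theorem cv_10_4 (a : α) (f : Fin 9 → α) : Matrix.vecCons a f (4 : Fin 10) = f 3 := rfl
theorem cv_10_5 (a : α) (f : Fin 9 → α) : Matrix.vecCons a f (5 : Fin 10) = f 4 := rfl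
theorem cv_10_6 (a : α) (f : Fin 9 → α) : Matrix.vecCons a f (6 : Fin 10) = f 5 := rfl
theorem cv_10_7 (a : α) (f : Fin 9 → α) : Matrix.vecCons a f (7 : Fin 10) = f 6 := rfl
theorem cv_10_8 (a : α) (f : Fin 9 → α) : Matrix.vecCons a f (8 : Fin 10) = f 7 := rfl
theorem cv_10_9 (a : α) (f : Fin 9 → α) : Matrix.vecCons a f (9 : Fin 10) = f 8 := rfl
theorem cv_11_1 (a : α) (f : Fin 10 → α) : Matrix.vecCons a f (1 : Fin 11) = f 0 := rfl
theorem cv_11_2 (a : α) (f : Fin 10 → α) : Matrix.vecCons a f (2 : Fin 11) = f 1 := rfl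
theorem cv_11_3 (a : α) (f : Fin 10 → α) : Matrix.vecCons a f (3 : Fin 11) = f 2 := rfl
theorem cv_11_4 (a : α) (f : Fin 10 → α) : Matrix.vecCons a f (4 : Fin 11) = f 3 := rfl
theorem cv_11_5 (a : α) (f : Fin 10 → α) : Matrix.vecCons a f (5 : Fin 11) = f 4 := rfl
theorem cv_11_6 (a : α) (f : Fin 10 → α) : Matrix.vecCons a f (6 : Fin 11) = f 5 := rfl
theorem cv_11_7 (a : α) (f : Fin 10 → α) : Matrix.vecCons a f (7 : Fin 11) = f 6 := rfl
theorem cv_11_8 (a : α) (f : Fin 10 → α) : Matrix.vecCons a f (8 : Fin 11) = f 7 := rfl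
theorem cv_11_9 (a : α) (f : Fin 10 → α) : Matrix.vecCons a f (9 : Fin 11) = f 8 := rfl
theorem cv_11_10 (a : α) (f : Fin 10 → α) : Matrix.vecCons a f (10 : Fin 11) = f 9 := rfl
theorem cv_12_1 (a : α) (f : Fin 11 → α) : Matrix.vecCons a f (1 : Fin 12) = f 0 := rfl
theorem cv_12_2 (a : α) (f : Fin 11 → α) : Matrix.vecCons a f (2 : Fin 12) = f 1 := rfl
theorem cv_12_3 (a : α) (f : Fin 11 → α) : Matrix.vecCons a f (3 : Fin 12) = f 2 := rfl
theorem cv_12_4 (a : α) (f : Fin 11 → α) : Matrix.vecCons a f (4 : Fin 12) = f 3 := rfl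
theorem cv_12_5 (a : α) (f : Fin 11 → α) : Matrix.vecCons a f (5 : Fin 12) = f 4 := rfl
theorem cv_12_6 (a : α) (f : Fin 11 → α) : Matrix.vecCons a f (6 : Fin 12) = f 5 := rfl
theorem cv_12_7 (a : α) (f : Fin 11 → α) : Matrix.vecCons a f (7 : Fin 12) = f 6 := rfl
theorem cv_12_8 (a : α) (f : Fin 11 → α) : Matrix.vecCons a f (8 : Fin 12) = f 7 := rfl
theorem cv_12_9 (a : α) (f : Fin 11 → α) : Matrix.vecCons a f (9 : Fin 12) = f 8 := rfl
theorem cv_12_10 (a : α) (f : Fin 11 → α) : Matrix.vecCons a f (10 : Fin 12) = f 9 := rfl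
theorem cv_12_11 (a : α) (f : Fin 11 → α) : Matrix.vecCons a f (11 : Fin 12) = f 10 := rfl
theorem cv_13_1 (a : α) (f : Fin 12 → α) : Matrix.vecCons a f (1 : Fin 13) = f 0 := rfl
theorem cv_13_2 (a : α) (f : Fin 12 → α) : Matrix.vecCons a f (2 : Fin 13) = f 1 := rfl
theorem cv_13_3 (a : α) (f : Fin 12 → α) : Matrix.vecCons a f (3 : Fin 13) = f 2 := rfl
theorem cv_13_4 (a : α) (f : Fin 12 → α) : Matrix.vecCons a f (4 : Fin 13) = f 3 := rfl
theorem cv_13_5 (a : α) (f : Fin 12 → α) : Matrix.vecCons a f (5 : Fin 13) = f 4 := rfl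
theorem cv_13_6 (a : α) (f : Fin 12 → α) : Matrix.vecCons a f (6 : Fin 13) = f 5 := rfl
theorem cv_13_7 (a : α) (f : Fin 12 → α) : Matrix.vecCons a f (7 : Fin 13) = f 6 := rfl
theorem cv_13_8 (a : α) (f : Fin 12 → α) : Matrix.vecCons a f (8 : Fin 13) = f 7 := rfl
theorem cv_13_9 (a : α) (f : Fin 12 → α) : Matrix.vecCons a f (9 : Fin 13) = f 8 := rfl
theorem cv_13_10 (a : α) (f : Fin 12 → α) : Matrix.vecCons a f (10 : Fin 13) = f 9 := rfl
theorem cv_13_11 (a : α) (f : Fin 12 → α) : Matrix.vecCons a f (11 : Fin 13) = f 10 := rfl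
theorem cv_13_12 (a : α) (f : Fin 12 → α) : Matrix.vecCons a f (12 : Fin 13) = f 11 := rfl
theorem cv_14_1 (a : α) (f : Fin 13 → α) : Matrix.vecCons a f (1 : Fin 14) = f 0 := rfl
theorem cv_14_2 (a : α) (f : Fin 13 → α) : Matrix.vecCons a f (2 : Fin 14) = f 1 := rfl
theorem cv_14_3 (a : α) (f : Fin 13 → α) : Matrix.vecCons a f (3 : Fin 14) = f 2 := rfl
theorem cv_14_4 (a : α) (f : Fin 13 → α) : Matrix.vecCons a f (4 : Fin 14) = f 3 := rfl
theorem cv_14_5 (a : α) (f : Fin 13 → α) : Matrix.vecCons a f (5 : Fin 14) = f 4 := rfl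
theorem cv_14_6 (a : α) (f : Fin 13 → α) : Matrix.vecCons a f (6 : Fin 14) = f 5 := rfl
theorem cv_14_7 (a : α) (f : Fin 13 → α) : Matrix.vecCons a f (7 : Fin 14) = f 6 := rfl
theorem cv_14_8 (a : α) (f : Fin 13 → α) : Matrix.vecCons a f (8 : Fin 14) = f 7 := rfl
theorem cv_14_9 (a : α) (f : Fin 13 → α) : Matrix.vecCons a f (9 : Fin 14) = f 8 := rfl
theorem cv_14_10 (a : α) (f : Fin 13 → α) : Matrix.vecCons a f (10 : Fin 14) = f 9 := rfl
theorem cv_14_11 (a : α) (f : Fin 13 → α) : Matrix.vecCons a f (11 : Fin 14) = f 10 := rfl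
theorem cv_14_12 (a : α) (f : Fin 13 → α) : Matrix.vecCons a f (12 : Fin 14) = f 11 := rfl
theorem cv_14_13 (a : α) (f : Fin 13 → α) : Matrix.vecCons a f (13 : Fin 14) = f 12 := rfl
end CV

theorem fmk_7_2 (h : 2 < 7) : (⟨2,h⟩ : Fin 7) = (2 : Fin 7) := rfl
theorem fmk_7_3 (h : 3 < 7) : (⟨3,h⟩ : Fin 7) = (3 : Fin 7) := rfl
theorem fmk_7_4 (h : 4 < 7) : (⟨4,h⟩ : Fin 7) = (4 : Fin 7) := rfl
theorem fmk_7_5 (h : 5 < 7) : (⟨5,h⟩ : Fin 7) = (5 : Fin 7) := rfl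
theorem fmk_7_6 (h : 6 < 7) : (⟨6,h⟩ : Fin 7) = (6 : Fin 7) := rfl

def uu (s t : Fin 14 → ℝ) : Fin 14 → ℝ :=
![(1) * s 1 * t 2 + (-1) * s 2 * t 1 + (-1) * s 4 * t 5 + (1) * s 5 * t 4 + (-2) * s 6 * t 8 + (1) * s 7 * t 9 + (2) * s 8 * t 6 + (-1) * s 9 * t 7 + (1) * s 10 * t 12 + (-1) * s 12 * t 10,
   (1) * s 0 * t 1 + (-1) * s 1 * t 0 + (1) * s 1 * t 3 + (-1) * s 3 * t 1 + (-3) * s 7 * t 8 + (3) * s 8 * t 7 + (1) * s 10 * t 13 + (-1) * s 13 * t 10,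
   (-1) * s 0 * t 2 + (1) * s 2 * t 0 + (-1) * s 2 * t 3 + (1) * s 3 * t 2 + (-3) * s 6 * t 9 + (3) * s 9 * t 6 + (1) * s 11 * t 12 + (-1) * s 12 * t 11,
   (-1) * s 1 * t 2 + (1) * s 2 * t 1 + (-1) * s 4 * t 5 + (1) * s 5 * t 4 + (1) * s 6 * t 8 + (-2) * s 7 * t 9 + (-1) * s 8 * t 6 + (2) * s 9 * t 7 + (1) * s 11 * t 13 + (-1) * s 13 * t 11,
   (-1) * s 0 * t 4 + (-1) * s 3 * t 4 + (1) * s 4 * t 0 + (1) * s 4 * t 3 + (-2) * s 6 * t 7 + (2) * s 7 * t 6 + (-1) * s 8 * t 12 + (-1) * s 9 * t 13 + (1) * s 12 * t 8 + (1) * s 13 * t 9,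
   (1) * s 0 * t 5 + (1) * s 3 * t 5 + (-1) * s 5 * t 0 + (-1) * s 5 * t 3 + (1) * s 6 * t 10 + (1) * s 7 * t 11 + (2) * s 8 * t 9 + (-2) * s 9 * t 8 + (-1) * s 10 * t 6 + (-1) * s 11 * t 7,
   (-1) * s 0 * t 6 + (-1) * s 2 * t 7 + (-2) * s 4 * t 9 + (1) * s 5 * t 12 + (1) * s 6 * t 0 + (1) * s 7 * t 2 + (2) * s 9 * t 4 + (-1) * s 12 * t 5,
   (-1) * s 1 * t 6 + (-1) * s 3 * t 7 + (2) * s 4 * t 8 + (1) * s 5 * t 13 + (1) * s 6 * t 1 + (1) * s 7 * t 3 + (-2) * s 8 * t 4 + (-1) * s 13 * t 5,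
   (1) * s 0 * t 8 + (1) * s 1 * t 9 + (-1) * s 4 * t 10 + (2) * s 5 * t 7 + (-2) * s 7 * t 5 + (-1) * s 8 * t 0 + (-1) * s 9 * t 1 + (1) * s 10 * t 4,
   (1) * s 2 * t 8 + (1) * s 3 * t 9 + (-1) * s 4 * t 11 + (-2) * s 5 * t 6 + (2) * s 6 * t 5 + (-1) * s 8 * t 2 + (-1) * s 9 * t 3 + (1) * s 11 * t 4,
   (2) * s 0 * t 10 + (1) * s 1 * t 11 + (1) * s 3 * t 10 + (-3) * s 5 * t 8 + (3) * s 8 * t 5 + (-2) * s 10 * t 0 + (-1) * s 10 * t 3 + (-1) * s 11 * t 1,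
   (1) * s 0 * t 11 + (1) * s 2 * t 10 + (2) * s 3 * t 11 + (-3) * s 5 * t 9 + (3) * s 9 * t 5 + (-1) * s 10 * t 2 + (-1) * s 11 * t 0 + (-2) * s 11 * t 3,
   (-2) * s 0 * t 12 + (-1) * s 2 * t 13 + (-1) * s 3 * t 12 + (3) * s 4 * t 6 + (-3) * s 6 * t 4 + (2) * s 12 * t 0 + (1) * s 12 * t 3 + (1) * s 13 * t 2,
   (-1) * s 0 * t 13 + (-1) * s 1 * t 12 + (-2) * s 3 * t 13 + (3) * s 4 * t 7 + (-3) * s 7 * t 4 + (1) * s 12 * t 1 + (1) * s 13 * t 0 + (2) * s 13 * t 3]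


set_option maxHeartbeats 4000000 in
theorem comm_aux (s t : Fin 14 → ℝ) : Mg s * Mg t - Mg t * Mg s = Mg (uu s t) := by
  have h2 : Real.sqrt 2 ^ 2 = 2 := Real.sq_sqrt (by norm_num)
  ext i j
  fin_cases i <;> fin_cases j <;>
    simp only [fmk_7_2, fmk_7_3, fmk_7_4, fmk_7_5, fmk_7_6, Fin.mk_zero, Fin.mk_one,
      Matrix.sub_apply, Matrix.mul_apply, Fin.sum_univ_seven, Mg, uu,
      Matrix.of_apply, Matrix.cons_val_zero, cv_2_1, cv_3_1, cv_3_2, cv_4_1, cv_4_2, cv_4_3, cv_5_1, cv_5_2, cv_5_3, cv_5_4, cv_6_1, cv_6_2, cv_6_3, cv_6_4, cv_6_5, cv_7_1, cv_7_2, cv_7_3, cv_7_4, cv_7_5, cv_7_6, cv_8_1, cv_8_2, cv_8_3, cv_8_4, cv_8_5, cv_8_6, cv_8_7, cv_9_1, cv_9_2, cv_9_3, cv_9_4, cv_9_5, cv_9_6, cv_9_7, cv_9_8, cv_10_1, cv_10_2, cv_10_3, cv_10_4, cv_10_5, cv_10_6, cv_10_7, cv_10_8, cv_10_9, cv_11_1,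 cv_11_2, cv_11_3, cv_11_4, cv_11_5, cv_11_6, cv_11_7, cv_11_8, cv_11_9, cv_11_10, cv_12_1, cv_12_2, cv_12_3, cv_12_4, cv_12_5, cv_12_6, cv_12_7, cv_12_8, cv_12_9, cv_12_10, cv_12_11, cv_13_1, cv_13_2, cv_13_3, cv_13_4, cv_13_5, cv_13_6, cv_13_7, cv_13_8, cv_13_9, cv_13_10, cv_13_11, cv_13_12, cv_14_1, cv_14_2, cv_14_3, cv_14_4, cv_14_5, cv_14_6, cv_14_7, cv_14_8, cv_14_9, cv_14_10, cv_14_11, cv_14_12, cv_14_13] <;>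
    ring_nf <;>
    (try rw [h2]) <;>
    ring_nf

set_option maxHeartbeats 1000000 in
theorem skew_aux (s : Fin 14 → ℝ) (X Y : Fin 7 → ℝ) :
    ((Mg s).mulVec X) ⬝ᵥ G1.mulVec Y + X ⬝ᵥ G1.mulVec ((Mg s).mulVec Y) = 0 := by
  simp only [Matrix.mulVec, dotProduct, Fin.sum_univ_seven, Mg, G1,
    Matrix.of_apply, Matrix.cons_val_zero, cv_2_1, cv_3_1, cv_3_2, cv_4_1, cv_4_2, cv_4_3, cv_5_1, cv_5_2, cv_5_3, cv_5_4, cv_6_1, cv_6_2, cv_6_3, cv_6_4, cv_6_5, cv_7_1, cv_7_2, cv_7_3, cv_7_4, cv_7_5, cv_7_6, cv_8_1, cv_8_2, cv_8_3, cv_8_4, cv_8_5, cv_8_6, cv_8_7, cv_9_1, cv_9_2, cv_9_3, cv_9_4, cv_9_5, cv_9_6, cv_9_7, cv_9_8, cv_10_1, cv_10_2, cv_10_3, cv_10_4, cv_10_5, cv_10_6, cv_10_7, cv_10_8, cv_10_9, cv_11_1, cv_11_2, cv_11_3, cv_11_4, cv_11_5, cv_11_6, cv_11_7, cv_11_8,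 cv_11_9, cv_11_10, cv_12_1, cv_12_2, cv_12_3, cv_12_4, cv_12_5, cv_12_6, cv_12_7, cv_12_8, cv_12_9, cv_12_10, cv_12_11, cv_13_1, cv_13_2, cv_13_3, cv_13_4, cv_13_5, cv_13_6, cv_13_7, cv_13_8, cv_13_9, cv_13_10, cv_13_11, cv_13_12, cv_14_1, cv_14_2, cv_14_3, cv_14_4, cv_14_5, cv_14_6, cv_14_7, cv_14_8, cv_14_9, cv_14_10, cv_14_11, cv_14_12, cv_14_13]
  ring

def Lg : (Fin 14 → ℝ) →ₗ[ℝ] Matrix (Fin 7) (Fin 7) ℝ where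
  toFun := Mg
  map_add' s t := by
    ext i j
    fin_cases i <;> fin_cases j <;>
      simp only [fmk_7_2, fmk_7_3, fmk_7_4, fmk_7_5, fmk_7_6, Fin.mk_zero, Fin.mk_one,
        Matrix.add_apply, Pi.add_apply, Mg,
        Matrix.of_apply, Matrix.cons_val_zero, cv_2_1, cv_3_1, cv_3_2, cv_4_1, cv_4_2, cv_4_3, cv_5_1, cv_5_2, cv_5_3, cv_5_4, cv_6_1, cv_6_2, cv_6_3, cv_6_4, cv_6_5, cv_7_1, cv_7_2, cv_7_3, cv_7_4, cv_7_5, cv_7_6, cv_8_1, cv_8_2, cv_8_3, cv_8_4, cv_8_5, cv_8_6, cv_8_7, cv_9_1, cv_9_2, cv_9_3, cv_9_4, cv_9_5, cv_9_6, cv_9_7, cv_9_8, cv_10_1, cv_10_2, cv_10_3, cv_10_4, cv_10_5, cv_10_6, cv_10_7, cv_10_8, cv_10_9, cv_11_1, cv_11_2, cv_11_3, cv_11_4, cv_11_5, cv_11_6, cv_11_7, cv_11_8, cv_11_9, cv_11_10, cv_12_1, cv_12_2, cv_12_3, cv_12_4, cv_12_5, cv_12_6, cv_12_7, cv_12_8,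 cv_12_9, cv_12_10, cv_12_11, cv_13_1, cv_13_2, cv_13_3, cv_13_4, cv_13_5, cv_13_6, cv_13_7, cv_13_8, cv_13_9, cv_13_10, cv_13_11, cv_13_12, cv_14_1, cv_14_2, cv_14_3, cv_14_4, cv_14_5, cv_14_6, cv_14_7, cv_14_8, cv_14_9, cv_14_10, cv_14_11, cv_14_12, cv_14_13] <;> ring
  map_smul' c s := by
    ext i j
    fin_cases i <;> fin_cases j <;>
      simp only [fmk_7_2, fmk_7_3, fmk_7_4, fmk_7_5, fmk_7_6, Fin.mk_zero, Fin.mk_one,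
        Matrix.smul_apply, Pi.smul_apply, smul_eq_mul, RingHom.id_apply, Mg,
        Matrix.of_apply, Matrix.cons_val_zero, cv_2_1, cv_3_1, cv_3_2, cv_4_1, cv_4_2, cv_4_3, cv_5_1, cv_5_2, cv_5_3, cv_5_4, cv_6_1, cv_6_2, cv_6_3, cv_6_4, cv_6_5, cv_7_1, cv_7_2, cv_7_3, cv_7_4, cv_7_5, cv_7_6, cv_8_1, cv_8_2, cv_8_3, cv_8_4, cv_8_5, cv_8_6, cv_8_7, cv_9_1, cv_9_2, cv_9_3, cv_9_4, cv_9_5, cv_9_6, cv_9_7, cv_9_8, cv_10_1, cv_10_2, cv_10_3, cv_10_4, cv_10_5, cv_10_6, cv_10_7, cv_10_8, cv_10_9, cv_11_1, cv_11_2, cv_11_3, cv_11_4, cv_11_5, cv_11_6, cv_11_7, cv_11_8, cv_11_9, cv_11_10, cv_12_1, cv_12_2, cv_12_3, cv_12_4, cv_12_5, cv_12_6, cv_12_7, cv_12_8, cv_12_9, cv_12_10, cv_12_11, cv_13_1, cv_13_2, cv_13_3, cv_13_4, cv_13_5, cv_13_6, cv_13_7, cv_13_8, cv_13_9, cv_13_10,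 cv_13_11, cv_13_12, cv_14_1, cv_14_2, cv_14_3, cv_14_4, cv_14_5, cv_14_6, cv_14_7, cv_14_8, cv_14_9, cv_14_10, cv_14_11, cv_14_12, cv_14_13] <;> ring

theorem Lg_inj : Function.Injective Lg := by
  intro s t h
  simp only [Lg, LinearMap.coe_mk, AddHom.coe_mk] at h
  funext k
  have e : ∀ i j : Fin 7, Mg s i j = Mg t i j := fun i j => by rw [h]
  have e0 := e 1 1; have e1 := e 1 2; have e2 := e 2 1; have e3 := e 2 2
  have e4 := e 4 1; have e5 := e 1 4; have e6 := e 2 0; have e7 := e 1 0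
  have e8 := e 0 2; have e9 := e 0 1; have e10 := e 0 6; have e11 := e 0 4
  have e12 := e 5 1; have e13 := e 5 2
  simp only [Mg, Matrix.of_apply, Matrix.cons_val_zero, cv_2_1, cv_3_1, cv_3_2, cv_4_1, cv_4_2, cv_4_3, cv_5_1, cv_5_2, cv_5_3, cv_5_4, cv_6_1, cv_6_2, cv_6_3, cv_6_4, cv_6_5, cv_7_1, cv_7_2, cv_7_3, cv_7_4, cv_7_5, cv_7_6, cv_8_1, cv_8_2, cv_8_3, cv_8_4, cv_8_5, cv_8_6, cv_8_7, cv_9_1, cv_9_2, cv_9_3, cv_9_4, cv_9_5, cv_9_6, cv_9_7, cv_9_8, cv_10_1, cv_10_2, cv_10_3, cv_10_4, cv_10_5, cv_10_6, cv_10_7, cv_10_8, cv_10_9, cv_11_1, cv_11_2, cv_11_3, cv_11_4, cv_11_5, cv_11_6, cv_11_7, cv_11_8, cv_11_9, cv_11_10, cv_12_1, cv_12_2, cv_12_3, cv_12_4, cv_12_5, cv_12_6, cv_12_7, cv_12_8, cv_12_9, cv_12_10, cv_12_11, cv_13_1, cv_13_2, cv_13_3, cv_13_4, cv_13_5, cv_13_6,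 cv_13_7, cv_13_8, cv_13_9, cv_13_10, cv_13_11, cv_13_12, cv_14_1, cv_14_2, cv_14_3, cv_14_4, cv_14_5, cv_14_6, cv_14_7, cv_14_8, cv_14_9, cv_14_10, cv_14_11, cv_14_12, cv_14_13,
    neg_inj] at e0 e1 e2 e3 e4 e5 e6 e7 e8 e9 e10 e11 e12 e13
  fin_cases k <;> assumption

theorem finrank_aux :
    Module.finrank ℝ
      (Submodule.span ℝ {m : Matrix (Fin 7) (Fin 7) ℝ | ∃ s : Fin 14 → ℝ, m = Mg s})
      = 14 := by
  have hset : {m : Matrix (Fin 7) (Fin 7) ℝ | ∃ s : Fin 14 → ℝ, m = Mg s}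
      = Set.range Lg := by
    ext m
    constructor
    · rintro ⟨s, rfl⟩; exact ⟨s, rfl⟩
    · rintro ⟨s, rfl⟩; exact ⟨s, rfl⟩
  rw [hset, ← LinearMap.coe_range, Submodule.span_eq,
    LinearMap.finrank_range_of_inj Lg_inj]
  simp

/-- the 14-parameter family 𝔤 = {M(s)} is closed under commutators,
14-dimensional, and consists of g-skew matrices; hence 𝔤 ⊂ 𝔰𝔬(4,3). -/
theorem stmt_12 :
    (∀ s t : Fin 14 → ℝ, ∃ u : Fin 14 → ℝ, Mg s * Mg t - Mg t * Mg s = Mg u) ∧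
    (∀ (s : Fin 14 → ℝ) (X Y : Fin 7 → ℝ),
      ((Mg s).mulVec X) ⬝ᵥ G1.mulVec Y + X ⬝ᵥ G1.mulVec ((Mg s).mulVec Y) = 0) ∧
    Module.finrank ℝ
      (Submodule.span ℝ {m : Matrix (Fin 7) (Fin 7) ℝ | ∃ s : Fin 14 → ℝ, m = Mg s})
      = 14 := by
  exact ⟨fun s t => ⟨uu s t, comm_aux s t⟩, skew_aux, finrank_aux⟩
end
end

section
/- In the 14-dimensional Lie algebra 𝔤 of the previous context, the subspace 𝔭_2 = {M(s) : s_3 = s_5 = s_7 = s_13 = s_14 = 0} is a 9-dimensional Lie subalgebra. -/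
open Matrix Real

noncomputable section

lemma cv7_0 {α : Type*} (a0 a1 a2 a3 a4 a5 a6 : α) : ![a0,a1,a2,a3,a4,a5,a6] (0:Fin 7) = a0 := rfl
lemma cv7_1 {α : Type*} (a0 a1 a2 a3 a4 a5 a6 : α) : ![a0,a1,a2,a3,a4,a5,a6] (1:Fin 7) = a1 := rfl
lemma cv7_2 {α : Type*} (a0 a1 a2 a3 a4 a5 a6 : α) : ![a0,a1,a2,a3,a4,a5,a6] (2:Fin 7) = a2 := rfl
lemma cv7_3 {α : Type*} (a0 a1 a2 a3 a4 a5 a6 : α) : ![a0,a1,a2,a3,a4,a5,a6] (3:Fin 7) = a3 := rfl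
lemma cv7_4 {α : Type*} (a0 a1 a2 a3 a4 a5 a6 : α) : ![a0,a1,a2,a3,a4,a5,a6] (4:Fin 7) = a4 := rfl
lemma cv7_5 {α : Type*} (a0 a1 a2 a3 a4 a5 a6 : α) : ![a0,a1,a2,a3,a4,a5,a6] (5:Fin 7) = a5 := rfl
lemma cv7_6 {α : Type*} (a0 a1 a2 a3 a4 a5 a6 : α) : ![a0,a1,a2,a3,a4,a5,a6] (6:Fin 7) = a6 := rfl
lemma cvm7_0 {α : Type*} (h : 0 < 7) (a0 a1 a2 a3 a4 a5 a6 : α) : ![a0,a1,a2,a3,a4,a5,a6] (⟨0,h⟩:Fin 7) = a0 := rfl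
lemma cvm7_1 {α : Type*} (h : 1 < 7) (a0 a1 a2 a3 a4 a5 a6 : α) : ![a0,a1,a2,a3,a4,a5,a6] (⟨1,h⟩:Fin 7) = a1 := rfl
lemma cvm7_2 {α : Type*} (h : 2 < 7) (a0 a1 a2 a3 a4 a5 a6 : α) : ![a0,a1,a2,a3,a4,a5,a6] (⟨2,h⟩:Fin 7) = a2 := rfl
lemma cvm7_3 {α : Type*} (h : 3 < 7) (a0 a1 a2 a3 a4 a5 a6 : α) : ![a0,a1,a2,a3,a4,a5,a6] (⟨3,h⟩:Fin 7) = a3 := rfl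
lemma cvm7_4 {α : Type*} (h : 4 < 7) (a0 a1 a2 a3 a4 a5 a6 : α) : ![a0,a1,a2,a3,a4,a5,a6] (⟨4,h⟩:Fin 7) = a4 := rfl
lemma cvm7_5 {α : Type*} (h : 5 < 7) (a0 a1 a2 a3 a4 a5 a6 : α) : ![a0,a1,a2,a3,a4,a5,a6] (⟨5,h⟩:Fin 7) = a5 := rfl
lemma cvm7_6 {α : Type*} (h : 6 < 7) (a0 a1 a2 a3 a4 a5 a6 : α) : ![a0,a1,a2,a3,a4,a5,a6] (⟨6,h⟩:Fin 7) = a6 := rfl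
lemma cv14_0 {α : Type*} (a0 a1 a2 a3 a4 a5 a6 a7 a8 a9 a10 a11 a12 a13 : α) : ![a0,a1,a2,a3,a4,a5,a6,a7,a8,a9,a10,a11,a12,a13] (0:Fin 14) = a0 := rfl
lemma cv14_1 {α : Type*} (a0 a1 a2 a3 a4 a5 a6 a7 a8 a9 a10 a11 a12 a13 : α) : ![a0,a1,a2,a3,a4,a5,a6,a7,a8,a9,a10,a11,a12,a13] (1:Fin 14) = a1 := rfl
lemma cv14_2 {α : Type*} (a0 a1 a2 a3 a4 a5 a6 a7 a8 a9 a10 a11 a12 a13 : α) : ![a0,a1,a2,a3,a4,a5,a6,a7,a8,a9,a10,a11,a12,a13] (2:Fin 14) = a2 := rfl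
lemma cv14_3 {α : Type*} (a0 a1 a2 a3 a4 a5 a6 a7 a8 a9 a10 a11 a12 a13 : α) : ![a0,a1,a2,a3,a4,a5,a6,a7,a8,a9,a10,a11,a12,a13] (3:Fin 14) = a3 := rfl
lemma cv14_4 {α : Type*} (a0 a1 a2 a3 a4 a5 a6 a7 a8 a9 a10 a11 a12 a13 : α) : ![a0,a1,a2,a3,a4,a5,a6,a7,a8,a9,a10,a11,a12,a13] (4:Fin 14) = a4 := rfl
lemma cv14_5 {α : Type*} (a0 a1 a2 a3 a4 a5 a6 a7 a8 a9 a10 a11 a12 a13 : α) : ![a0,a1,a2,a3,a4,a5,a6,a7,a8,a9,a10,a11,a12,a13] (5:Fin 14) = a5 := rfl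
lemma cv14_6 {α : Type*} (a0 a1 a2 a3 a4 a5 a6 a7 a8 a9 a10 a11 a12 a13 : α) : ![a0,a1,a2,a3,a4,a5,a6,a7,a8,a9,a10,a11,a12,a13] (6:Fin 14) = a6 := rfl
lemma cv14_7 {α : Type*} (a0 a1 a2 a3 a4 a5 a6 a7 a8 a9 a10 a11 a12 a13 : α) : ![a0,a1,a2,a3,a4,a5,a6,a7,a8,a9,a10,a11,a12,a13] (7:Fin 14) = a7 := rfl
lemma cv14_8 {α : Type*} (a0 a1 a2 a3 a4 a5 a6 a7 a8 a9 a10 a11 a12 a13 : α) : ![a0,a1,a2,a3,a4,a5,a6,a7,a8,a9,a10,a11,a12,a13] (8:Fin 14) = a8 := rfl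
lemma cv14_9 {α : Type*} (a0 a1 a2 a3 a4 a5 a6 a7 a8 a9 a10 a11 a12 a13 : α) : ![a0,a1,a2,a3,a4,a5,a6,a7,a8,a9,a10,a11,a12,a13] (9:Fin 14) = a9 := rfl
lemma cv14_10 {α : Type*} (a0 a1 a2 a3 a4 a5 a6 a7 a8 a9 a10 a11 a12 a13 : α) : ![a0,a1,a2,a3,a4,a5,a6,a7,a8,a9,a10,a11,a12,a13] (10:Fin 14) = a10 := rfl
lemma cv14_11 {α : Type*} (a0 a1 a2 a3 a4 a5 a6 a7 a8 a9 a10 a11 a12 a13 : α) : ![a0,a1,a2,a3,a4,a5,a6,a7,a8,a9,a10,a11,a12,a13] (11:Fin 14) = a11 := rfl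
lemma cv14_12 {α : Type*} (a0 a1 a2 a3 a4 a5 a6 a7 a8 a9 a10 a11 a12 a13 : α) : ![a0,a1,a2,a3,a4,a5,a6,a7,a8,a9,a10,a11,a12,a13] (12:Fin 14) = a12 := rfl
lemma cv14_13 {α : Type*} (a0 a1 a2 a3 a4 a5 a6 a7 a8 a9 a10 a11 a12 a13 : α) : ![a0,a1,a2,a3,a4,a5,a6,a7,a8,a9,a10,a11,a12,a13] (13:Fin 14) = a13 := rfl
lemma cv9_0 {α : Type*} (a0 a1 a2 a3 a4 a5 a6 a7 a8 : α) : ![a0,a1,a2,a3,a4,a5,a6,a7,a8] (0:Fin 9) = a0 := rfl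
lemma cv9_1 {α : Type*} (a0 a1 a2 a3 a4 a5 a6 a7 a8 : α) : ![a0,a1,a2,a3,a4,a5,a6,a7,a8] (1:Fin 9) = a1 := rfl
lemma cv9_2 {α : Type*} (a0 a1 a2 a3 a4 a5 a6 a7 a8 : α) : ![a0,a1,a2,a3,a4,a5,a6,a7,a8] (2:Fin 9) = a2 := rfl
lemma cv9_3 {α : Type*} (a0 a1 a2 a3 a4 a5 a6 a7 a8 : α) : ![a0,a1,a2,a3,a4,a5,a6,a7,a8] (3:Fin 9) = a3 := rfl
lemma cv9_4 {α : Type*} (a0 a1 a2 a3 a4 a5 a6 a7 a8 : α) : ![a0,a1,a2,a3,a4,a5,a6,a7,a8] (4:Fin 9) = a4 := rfl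
lemma cv9_5 {α : Type*} (a0 a1 a2 a3 a4 a5 a6 a7 a8 : α) : ![a0,a1,a2,a3,a4,a5,a6,a7,a8] (5:Fin 9) = a5 := rfl
lemma cv9_6 {α : Type*} (a0 a1 a2 a3 a4 a5 a6 a7 a8 : α) : ![a0,a1,a2,a3,a4,a5,a6,a7,a8] (6:Fin 9) = a6 := rfl
lemma cv9_7 {α : Type*} (a0 a1 a2 a3 a4 a5 a6 a7 a8 : α) : ![a0,a1,a2,a3,a4,a5,a6,a7,a8] (7:Fin 9) = a7 := rfl
lemma cv9_8 {α : Type*} (a0 a1 a2 a3 a4 a5 a6 a7 a8 : α) : ![a0,a1,a2,a3,a4,a5,a6,a7,a8] (8:Fin 9) = a8 := rfl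

lemma cvm14_0 {α : Type*} (h : 0 < 14) (a0 a1 a2 a3 a4 a5 a6 a7 a8 a9 a10 a11 a12 a13 : α) : ![a0,a1,a2,a3,a4,a5,a6,a7,a8,a9,a10,a11,a12,a13] (⟨0,h⟩:Fin 14) = a0 := rfl
lemma cvm14_1 {α : Type*} (h : 1 < 14) (a0 a1 a2 a3 a4 a5 a6 a7 a8 a9 a10 a11 a12 a13 : α) : ![a0,a1,a2,a3,a4,a5,a6,a7,a8,a9,a10,a11,a12,a13] (⟨1,h⟩:Fin 14) = a1 := rfl
lemma cvm14_2 {α : Type*} (h : 2 < 14) (a0 a1 a2 a3 a4 a5 a6 a7 a8 a9 a10 a11 a12 a13 : α) : ![a0,a1,a2,a3,a4,a5,a6,a7,a8,a9,a10,a11,a12,a13] (⟨2,h⟩:Fin 14) = a2 := rfl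
lemma cvm14_3 {α : Type*} (h : 3 < 14) (a0 a1 a2 a3 a4 a5 a6 a7 a8 a9 a10 a11 a12 a13 : α) : ![a0,a1,a2,a3,a4,a5,a6,a7,a8,a9,a10,a11,a12,a13] (⟨3,h⟩:Fin 14) = a3 := rfl
lemma cvm14_4 {α : Type*} (h : 4 < 14) (a0 a1 a2 a3 a4 a5 a6 a7 a8 a9 a10 a11 a12 a13 : α) : ![a0,a1,a2,a3,a4,a5,a6,a7,a8,a9,a10,a11,a12,a13] (⟨4,h⟩:Fin 14) = a4 := rfl
lemma cvm14_5 {α : Type*} (h : 5 < 14) (a0 a1 a2 a3 a4 a5 a6 a7 a8 a9 a10 a11 a12 a13 : α) : ![a0,a1,a2,a3,a4,a5,a6,a7,a8,a9,a10,a11,a12,a13] (⟨5,h⟩:Fin 14) = a5 := rfl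
lemma cvm14_6 {α : Type*} (h : 6 < 14) (a0 a1 a2 a3 a4 a5 a6 a7 a8 a9 a10 a11 a12 a13 : α) : ![a0,a1,a2,a3,a4,a5,a6,a7,a8,a9,a10,a11,a12,a13] (⟨6,h⟩:Fin 14) = a6 := rfl
lemma cvm14_7 {α : Type*} (h : 7 < 14) (a0 a1 a2 a3 a4 a5 a6 a7 a8 a9 a10 a11 a12 a13 : α) : ![a0,a1,a2,a3,a4,a5,a6,a7,a8,a9,a10,a11,a12,a13] (⟨7,h⟩:Fin 14) = a7 := rfl
lemma cvm14_8 {α : Type*} (h : 8 < 14) (a0 a1 a2 a3 a4 a5 a6 a7 a8 a9 a10 a11 a12 a13 : α) : ![a0,a1,a2,a3,a4,a5,a6,a7,a8,a9,a10,a11,a12,a13] (⟨8,h⟩:Fin 14) = a8 := rfl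
lemma cvm14_9 {α : Type*} (h : 9 < 14) (a0 a1 a2 a3 a4 a5 a6 a7 a8 a9 a10 a11 a12 a13 : α) : ![a0,a1,a2,a3,a4,a5,a6,a7,a8,a9,a10,a11,a12,a13] (⟨9,h⟩:Fin 14) = a9 := rfl
lemma cvm14_10 {α : Type*} (h : 10 < 14) (a0 a1 a2 a3 a4 a5 a6 a7 a8 a9 a10 a11 a12 a13 : α) : ![a0,a1,a2,a3,a4,a5,a6,a7,a8,a9,a10,a11,a12,a13] (⟨10,h⟩:Fin 14) = a10 := rfl
lemma cvm14_11 {α : Type*} (h : 11 < 14) (a0 a1 a2 a3 a4 a5 a6 a7 a8 a9 a10 a11 a12 a13 : α) : ![a0,a1,a2,a3,a4,a5,a6,a7,a8,a9,a10,a11,a12,a13] (⟨11,h⟩:Fin 14) = a11 := rfl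
lemma cvm14_12 {α : Type*} (h : 12 < 14) (a0 a1 a2 a3 a4 a5 a6 a7 a8 a9 a10 a11 a12 a13 : α) : ![a0,a1,a2,a3,a4,a5,a6,a7,a8,a9,a10,a11,a12,a13] (⟨12,h⟩:Fin 14) = a12 := rfl
lemma cvm14_13 {α : Type*} (h : 13 < 14) (a0 a1 a2 a3 a4 a5 a6 a7 a8 a9 a10 a11 a12 a13 : α) : ![a0,a1,a2,a3,a4,a5,a6,a7,a8,a9,a10,a11,a12,a13] (⟨13,h⟩:Fin 14) = a13 := rfl
set_option maxHeartbeats 1000000 in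
lemma brk_aux (s t u : Fin 14 → ℝ) (hs2 : s 2 = 0) (hs4 : s 4 = 0) (hs6 : s 6 = 0)
    (hs12 : s 12 = 0) (hs13 : s 13 = 0)
    (ht2 : t 2 = 0) (ht4 : t 4 = 0) (ht6 : t 6 = 0) (ht12 : t 12 = 0) (ht13 : t 13 = 0)
    (h0 : u 0 = s 7 * t 9 - s 9 * t 7)
    (h1 : u 1 = s 0 * t 1 - s 1 * t 0 + s 1 * t 3 - s 3 * t 1 - 3*(s 7 * t 8) + 3*(s 8 * t 7))
    (h2 : u 2 = 0)
    (h3 : u 3 = -2*(s 7 * t 9) + 2*(s 9 * t 7))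
    (h4 : u 4 = 0)
    (h5 : u 5 = s 0 * t 5 - s 11 * t 7 + s 3 * t 5 - s 5 * t 0 - s 5 * t 3 + s 7 * t 11 + 2*(s 8 * t 9) - 2*(s 9 * t 8))
    (h6 : u 6 = 0)
    (h7 : u 7 = -(s 3 * t 7) + s 7 * t 3)
    (h8 : u 8 = s 0 * t 8 + s 1 * t 9 + 2*(s 5 * t 7) - 2*(s 7 * t 5) - s 8 * t 0 - s 9 * t 1)
    (h9 : u 9 = s 3 * t 9 - s 9 * t 3)
    (h10 : u 10 = 2*(s 0 * t 10) + s 1 * t 11 - 2*(s 10 * t 0) - s 10 * t 3 - s 11 * t 1 + s 3 * t 10 - 3*(s 5 * t 8) + 3*(s 8 * t 5))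
    (h11 : u 11 = s 0 * t 11 - s 11 * t 0 - 2*(s 11 * t 3) + 2*(s 3 * t 11) - 3*(s 5 * t 9) + 3*(s 9 * t 5))
    (h12 : u 12 = 0)
    (h13 : u 13 = 0) :
    Mg s * Mg t - Mg t * Mg s = Mg u := by
  have hq : Real.sqrt 2 ^ 2 = 2 := Real.sq_sqrt (by norm_num)
  ext i j
  fin_cases i <;> fin_cases j <;>
    simp only [Mg, Matrix.sub_apply, Matrix.mul_apply, Fin.sum_univ_seven, Matrix.of_apply,
      cv7_0, cv7_1, cv7_2, cv7_3, cv7_4, cv7_5, cv7_6,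
      cvm7_0, cvm7_1, cvm7_2, cvm7_3, cvm7_4, cvm7_5, cvm7_6, Fin.isValue,
      hs2, hs4, hs6, hs12, hs13, ht2, ht4, ht6, ht12, ht13,
      h0, h1, h2, h3, h4, h5, h6, h7, h8, h9, h10, h11, h12, h13] <;>
    ring_nf <;> (try rw [hq]) <;> (try ring)

/-- embed 9 free parameters into the 14 coordinates, zeros at 2,4,6,12,13. -/
def ext9 (v : Fin 9 → ℝ) : Fin 14 → ℝ :=
  ![v 0, v 1, 0, v 2, 0, v 3, 0, v 4, v 5, v 6, v 7, v 8, 0, 0]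

def Lmap : (Fin 9 → ℝ) →ₗ[ℝ] Matrix (Fin 7) (Fin 7) ℝ where
  toFun v := Mg (ext9 v)
  map_add' v w := by
    ext i j
    fin_cases i <;> fin_cases j <;>
      simp only [Mg, ext9, Matrix.of_apply, Matrix.add_apply, Pi.add_apply,
        cv7_0, cv7_1, cv7_2, cv7_3, cv7_4, cv7_5, cv7_6,
        cvm7_0, cvm7_1, cvm7_2, cvm7_3, cvm7_4, cvm7_5, cvm7_6,
        cv14_0, cv14_1, cv14_2, cv14_3, cv14_4, cv14_5, cv14_6, cv14_7, cv14_8, cv14_9,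
        cv14_10, cv14_11, cv14_12, cv14_13] <;> ring
  map_smul' c v := by
    ext i j
    fin_cases i <;> fin_cases j <;>
      simp only [Mg, ext9, Matrix.of_apply, Matrix.smul_apply, Pi.smul_apply, smul_eq_mul,
        RingHom.id_apply,
        cv7_0, cv7_1, cv7_2, cv7_3, cv7_4, cv7_5, cv7_6,
        cvm7_0, cvm7_1, cvm7_2, cvm7_3, cvm7_4, cvm7_5, cvm7_6,
        cv14_0, cv14_1, cv14_2, cv14_3, cv14_4, cv14_5, cv14_6, cv14_7, cv14_8, cv14_9,
        cv14_10, cv14_11, cv14_12, cv14_13] <;> ring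

lemma Lmap_inj : Function.Injective Lmap := by
  intro v w h
  have e : ∀ i j : Fin 7, Mg (ext9 v) i j = Mg (ext9 w) i j := by
    intro i j; exact congrFun (congrFun h i) j
  have e0 := e 1 1; have e1 := e 1 2; have e2 := e 2 2; have e3 := e 1 4
  have e4 := e 1 0; have e5 := e 0 2; have e6 := e 0 1; have e7 := e 0 6
  have e8 := e 0 4
  simp only [Mg, ext9, Matrix.of_apply,
    cv7_0, cv7_1, cv7_2, cv7_3, cv7_4, cv7_5, cv7_6,
    cv14_0, cv14_1, cv14_2, cv14_3, cv14_4, cv14_5, cv14_6, cv14_7, cv14_8, cv14_9,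
    cv14_10, cv14_11, cv14_12, cv14_13, neg_inj] at e0 e1 e2 e3 e4 e5 e6 e7 e8
  funext k
  fin_cases k
  · exact e0
  · exact e1
  · exact e2
  · exact e3
  · exact e4
  · exact e5
  · exact e6
  · exact e7
  · exact e8

lemma set_eq :
    {m : Matrix (Fin 7) (Fin 7) ℝ | ∃ s : Fin 14 → ℝ,
      s 2 = 0 ∧ s 4 = 0 ∧ s 6 = 0 ∧ s 12 = 0 ∧ s 13 = 0 ∧ m = Mg s} = Set.range Lmap := by
  ext m
  constructor
  · rintro ⟨s, h2, h4, h6, h12, h13, rfl⟩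
    refine ⟨![s 0, s 1, s 3, s 5, s 7, s 8, s 9, s 10, s 11], ?_⟩
    show Mg (ext9 _) = Mg s
    have hv : ext9 ![s 0, s 1, s 3, s 5, s 7, s 8, s 9, s 10, s 11] = s := by
      funext i
      fin_cases i <;>
        simp only [ext9,
          cvm14_0, cvm14_1, cvm14_2, cvm14_3, cvm14_4, cvm14_5, cvm14_6, cvm14_7, cvm14_8,
          cvm14_9, cvm14_10, cvm14_11, cvm14_12, cvm14_13,
          cv14_0, cv14_1, cv14_2, cv14_3, cv14_4, cv14_5, cv14_6, cv14_7, cv14_8, cv14_9,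
        cv14_10, cv14_11, cv14_12, cv14_13,
          cv9_0, cv9_1, cv9_2, cv9_3, cv9_4, cv9_5, cv9_6, cv9_7, cv9_8] <;>
        first
          | rfl
          | exact h2.symm | exact h4.symm | exact h6.symm | exact h12.symm | exact h13.symm
    rw [hv]
  · rintro ⟨v, rfl⟩
    exact ⟨ext9 v, rfl, rfl, rfl, rfl, rfl, rfl⟩

/-- 𝔭₂ = {M(s) : s₃ = s₅ = s₇ = s₁₃ = s₁₄ = 0} is a 9-dimensional Lie
subalgebra of 𝔤. -/
theorem stmt_13 :
    (∀ s t : Fin 14 → ℝ,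
      s 2 = 0 → s 4 = 0 → s 6 = 0 → s 12 = 0 → s 13 = 0 →
      t 2 = 0 → t 4 = 0 → t 6 = 0 → t 12 = 0 → t 13 = 0 →
      ∃ u : Fin 14 → ℝ, u 2 = 0 ∧ u 4 = 0 ∧ u 6 = 0 ∧ u 12 = 0 ∧ u 13 = 0 ∧
        Mg s * Mg t - Mg t * Mg s = Mg u) ∧
    Module.finrank ℝ
      (Submodule.span ℝ {m : Matrix (Fin 7) (Fin 7) ℝ | ∃ s : Fin 14 → ℝ,
        s 2 = 0 ∧ s 4 = 0 ∧ s 6 = 0 ∧ s 12 = 0 ∧ s 13 = 0 ∧ m = Mg s}) = 9 := by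
  constructor
  · intro s t hs2 hs4 hs6 hs12 hs13 ht2 ht4 ht6 ht12 ht13
    refine ⟨![s 7 * t 9 - s 9 * t 7,
        s 0 * t 1 - s 1 * t 0 + s 1 * t 3 - s 3 * t 1 - 3*(s 7 * t 8) + 3*(s 8 * t 7),
        0,
        -2*(s 7 * t 9) + 2*(s 9 * t 7),
        0,
        s 0 * t 5 - s 11 * t 7 + s 3 * t 5 - s 5 * t 0 - s 5 * t 3 + s 7 * t 11 + 2*(s 8 * t 9) - 2*(s 9 * t 8),
        0,
        -(s 3 * t 7) + s 7 * t 3,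
        s 0 * t 8 + s 1 * t 9 + 2*(s 5 * t 7) - 2*(s 7 * t 5) - s 8 * t 0 - s 9 * t 1,
        s 3 * t 9 - s 9 * t 3,
        2*(s 0 * t 10) + s 1 * t 11 - 2*(s 10 * t 0) - s 10 * t 3 - s 11 * t 1 + s 3 * t 10 - 3*(s 5 * t 8) + 3*(s 8 * t 5),
        s 0 * t 11 - s 11 * t 0 - 2*(s 11 * t 3) + 2*(s 3 * t 11) - 3*(s 5 * t 9) + 3*(s 9 * t 5),
        0,
        0], rfl, rfl, rfl, rfl, rfl, ?_⟩
    exact brk_aux s t _ hs2 hs4 hs6 hs12 hs13 ht2 ht4 ht6 ht12 ht13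
      rfl rfl rfl rfl rfl rfl rfl rfl rfl rfl rfl rfl rfl rfl
  · rw [set_eq, ← LinearMap.coe_range, Submodule.span_eq, LinearMap.finrank_range_of_inj Lmap_inj]
    simp
end
end

section
/- Define a 1-form-valued frame on ℝ^7 (coordinates x_1,…,x_7) by b^1 = dx_1 + r_6 dx_6 + r_7 dx_7, b^2 = dx_2 + s_7 dx_7, b^3 = dx_3, b^4 = dx_4 + u_6 dx_6 + u_7 dx_7, b^5 = dx_5, b^6 = e^{w_6} dx_6, b^7 = dx_7, with w_6 = (1/2) x_6 x_7^2, u_6 = u_7 = 0, s_7 = x_2 x_6 x_7 + (κ x_6 − x_6 x_7)(x_5 + κ^{-1} x_3), r_7 = x_1 x_6 x_7 + 2√2 x_4 (κ x_6 − x_6 x_7) − x_5·0·e^{−w_6}, r_6 = x_3(κ x_6 − x_6 x_7) e^{w_6} + x_5^2/2 (κ = ±1). Then the structure equations db^1 = −θ¹_j ∧ b^j etc. hold with a connection form θ taking values in the Lie algebra ℝ·I ⋉ Z_5(κ); equivalently, the PDE system (r_7)_{x_1} = (w_6)_{x_7}, (r_7)_{x_3} = √2 (s_7)_{x_4}, (r_7)_{x_4}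 = 2√2 (s_7)_{x_5} + [(u_6)_{x_7} − (u_7)_{x_6}] e^{−w_6}, (r_7)_{x_5} = κ (r_7)_{x_3} − (t_7)_{x_6} e^{−w_6}, (s_7)_{x_2} = (w_6)_{x_7}, (s_7)_{x_5} = κ (s_7)_{x_3} is satisfied by these functions (with t_7 = 0). -/
open Matrix Real

noncomputable section

/-- w₆ = ½ x₆ x₇². (Coordinates x₁,…,x₇ are indexed 0,…,6.) -/
def w6 (x : Fin 7 → ℝ) : ℝ := (1 / 2) * x 5 * (x 6) ^ 2

/-- r₆ = x₃(κx₆ − x₆x₇)e^{w₆} + x₅²/2. -/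
def r6A (κ : ℝ) (x : Fin 7 → ℝ) : ℝ :=
  x 2 * (κ * x 5 - x 5 * x 6) * Real.exp (w6 x) + (x 4) ^ 2 / 2

/-- r₇ = x₁x₆x₇ + 2√2 x₄(κx₆ − x₆x₇) − x₅·0·e^{−w₆}. -/
def r7A (κ : ℝ) (x : Fin 7 → ℝ) : ℝ :=
  x 0 * x 5 * x 6 + 2 * Real.sqrt 2 * x 3 * (κ * x 5 - x 5 * x 6)
    - x 4 * 0 * Real.exp (-(w6 x))

/-- s₇ = x₂x₆x₇ + (κx₆ − x₆x₇)(x₅ + κ⁻¹x₃). -/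
def s7A (κ : ℝ) (x : Fin 7 → ℝ) : ℝ :=
  x 1 * x 5 * x 6 + (κ * x 5 - x 5 * x 6) * (x 4 + κ⁻¹ * x 2)

/-- t₇ = u₆ = u₇ = 0. -/
def zf : (Fin 7 → ℝ) → ℝ := fun _ => 0

/-! The coframe functions are polynomials in the coordinates (the exponential term of `r₇`
carries a factor `0`), so their gradients are explicit combinations of the `dx j`, and each
equation of the system compares two coefficients of these gradients; the last one holds
because `κ κ⁻¹ = 1`. -/

def dx (j : Fin 7) : (Fin 7 → ℝ) →L[ℝ] ℝ := ContinuousLinearMap.proj j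

@[simp]
lemma dx_apply (j : Fin 7) (v : Fin 7 → ℝ) : dx j v = v j := rfl

lemma hasFDerivAt_coord (j : Fin 7) (x : Fin 7 → ℝ) :
    HasFDerivAt (fun y : Fin 7 → ℝ => y j) (dx j) x :=
  hasFDerivAt_apply j x

lemma HasFDerivAt.pd_eq {F : (Fin 7 → ℝ) → ℝ} {L : (Fin 7 → ℝ) →L[ℝ] ℝ} {x : Fin 7 → ℝ}
    (h : HasFDerivAt F L x) (i : Fin 7) : pd i F x = L (Pi.single i 1) := by
  rw [pd, h.fderiv]

lemma pd_zf (i : Fin 7) (x : Fin 7 → ℝ) : pd i zf x = 0 :=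
  (hasFDerivAt_const (0 : ℝ) x).pd_eq i

lemma hasFDerivAt_w6 (x : Fin 7 → ℝ) :
    HasFDerivAt w6 ((x 6 ^ 2 / 2) • dx 5 + (x 5 * x 6) • dx 6) x := by
  have h := ((hasFDerivAt_coord 5 x).const_mul (1 / 2 : ℝ)).mul ((hasFDerivAt_coord 6 x).pow 2)
  refine h.congr_fderiv ?_
  simp only [pow_one, Nat.add_one_sub_one]
  module

lemma r7A_eq (κ : ℝ) :
    r7A κ = fun x => x 0 * x 5 * x 6 + 2 * √2 * x 3 * (κ * x 5 - x 5 * x 6) := by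
  funext x
  simp [r7A]

lemma hasFDerivAt_r7A (κ : ℝ) (x : Fin 7 → ℝ) :
    HasFDerivAt (r7A κ)
      ((x 5 * x 6) • dx 0 + (2 * √2 * (κ * x 5 - x 5 * x 6)) • dx 3
        + (x 0 * x 6 + 2 * √2 * x 3 * (κ - x 6)) • dx 5
        + (x 0 * x 5 - 2 * √2 * x 3 * x 5) • dx 6) x := by
  have h := (((hasFDerivAt_coord 0 x).mul (hasFDerivAt_coord 5 x)).mul (hasFDerivAt_coord 6 x)).add
    (((hasFDerivAt_coord 3 x).const_mul (2 * √2)).mul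
      (((hasFDerivAt_coord 5 x).const_mul κ).sub
        ((hasFDerivAt_coord 5 x).mul (hasFDerivAt_coord 6 x))))
  rw [r7A_eq]
  refine h.congr_fderiv ?_
  simp only [Pi.mul_apply, Pi.sub_apply]
  module

lemma hasFDerivAt_s7A (κ : ℝ) (x : Fin 7 → ℝ) :
    HasFDerivAt (s7A κ)
      ((x 5 * x 6) • dx 1 + (κ⁻¹ * (κ * x 5 - x 5 * x 6)) • dx 2
        + (κ * x 5 - x 5 * x 6) • dx 4
        + (x 1 * x 6 + (κ - x 6) * (x 4 + κ⁻¹ * x 2)) • dx 5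
        + (x 1 * x 5 - x 5 * (x 4 + κ⁻¹ * x 2)) • dx 6) x := by
  have h := (((hasFDerivAt_coord 1 x).mul (hasFDerivAt_coord 5 x)).mul (hasFDerivAt_coord 6 x)).add
    ((((hasFDerivAt_coord 5 x).const_mul κ).sub
        ((hasFDerivAt_coord 5 x).mul (hasFDerivAt_coord 6 x))).mul
      ((hasFDerivAt_coord 4 x).add ((hasFDerivAt_coord 2 x).const_mul κ⁻¹)))
  refine h.congr_fderiv ?_
  simp only [Pi.mul_apply, Pi.sub_apply, Pi.add_apply]
  module

/-- the connection form takes values in ℝ·I ⋉ Z₅(κ); equivalently the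
listed PDE system holds for the given coframe functions. -/
theorem stmt_14 (κ : ℝ) (hκ : κ = 1 ∨ κ = -1) (x : Fin 7 → ℝ) :
    pd 0 (r7A κ) x = pd 6 w6 x ∧
    pd 2 (r7A κ) x = Real.sqrt 2 * pd 3 (s7A κ) x ∧
    pd 3 (r7A κ) x =
      2 * Real.sqrt 2 * pd 4 (s7A κ) x + (pd 6 zf x - pd 5 zf x) * Real.exp (-(w6 x)) ∧
    pd 4 (r7A κ) x = κ * pd 2 (r7A κ) x - pd 5 zf x * Real.exp (-(w6 x)) ∧
    pd 1 (s7A κ) x = pd 6 w6 x ∧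
    pd 4 (s7A κ) x = κ * pd 2 (s7A κ) x := by
  have hκ0 : κ ≠ 0 := by rcases hκ with rfl | rfl <;> norm_num
  simp [(hasFDerivAt_r7A κ x).pd_eq, (hasFDerivAt_s7A κ x).pd_eq, (hasFDerivAt_w6 x).pd_eq,
    pd_zf, hκ0]
end
end

section
/- With the choices f(x_6,x_7) = κx_6 − x_6 x_7, w_6 = (1/2) x_6 x_7^2, F_6 = x_5^2/2, and u_6 = u_7 = t_7 = F_7 = G_7 = 0, the functions r_6 = x_3 f e^{w_6} + F_6, r_7 = x_1 (w_6)_{x_7} + 2√2 x_4 f, s_7 = x_2 (w_6)_{x_7} + f·(x_5 + κ^{-1} x_3) satisfy the full PDE system: (r_7)_{x_1} = (w_6)_{x_7}, (r_7)_{x_3} = √2(s_7)_{x_4}, (r_7)_{x_4} = 2√2(s_7)_{x_5}, (r_7)_{x_4} = 2√2 (r_6)_{x_3} e^{−w_6}, (r_7)_{x_5} = κ(r_7)_{x_3}, (r_7)_{x_5} = √2 (r_6)_{x_4} e^{−w_6}, (s_7)_{x_2} = (w_6)_{x_7}, (s_7)_{x_5} = κ(s_7)_{x_3}. -/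
open Matrix Real

noncomputable section

/-- f = κx₆ − x₆x₇. -/
def fK (κ : ℝ) (x : Fin 7 → ℝ) : ℝ := κ * x 5 - x 5 * x 6

/-- r₆ = x₃ f e^{w₆} + F₆ with F₆ = x₅²/2. -/
def r6B (κ : ℝ) (x : Fin 7 → ℝ) : ℝ :=
  x 2 * fK κ x * Real.exp (w6 x) + (x 4) ^ 2 / 2

/-- r₇ = x₁ (w₆)_{x₇} + 2√2 x₄ f. -/
def r7B (κ : ℝ) (x : Fin 7 → ℝ) : ℝ :=
  x 0 * (fderiv ℝ w6 x (Pi.single 6 1)) + 2 * Real.sqrt 2 * x 3 * fK κ x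

/-- s₇ = x₂ (w₆)_{x₇} + f(x₅ + κ⁻¹x₃). -/
def s7B (κ : ℝ) (x : Fin 7 → ℝ) : ℝ :=
  x 1 * (fderiv ℝ w6 x (Pi.single 6 1)) + fK κ x * (x 4 + κ⁻¹ * x 2)

/-!
Since `(w₆)_{x₇} = x₆x₇`, the functions `r₇` and `s₇` are polynomials, and `r₆` is a polynomial
times `e^{w₆}` plus `x₅²/2`. Their differentials are computed once and for all; every equation of
the system is then a polynomial identity, after the factor `e^{w₆}` in `(r₆)_{x₃}` cancels against
`e^{-w₆}` and, in the last equation, `κ κ⁻¹ = 1`.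
-/

section

variable (κ : ℝ) (x v : Fin 7 → ℝ)

@[fun_prop]
lemma differentiable_w6 : Differentiable ℝ w6 := by
  unfold w6; fun_prop

@[fun_prop]
lemma differentiable_fK : Differentiable ℝ (fK κ) := by
  unfold fK; fun_prop

lemma fderiv_w6_apply : fderiv ℝ w6 x v = x 6 ^ 2 / 2 * v 5 + x 5 * x 6 * v 6 := by
  unfold w6
  simp only [sq]
  simp (disch := fun_prop) [fderiv_fun_mul, fderiv_apply]
  ring

lemma fderiv_fK_apply : fderiv ℝ (fK κ) x v = (κ - x 6) * v 5 - x 5 * v 6 := by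
  unfold fK
  simp (disch := fun_prop) [fderiv_fun_mul, fderiv_fun_sub, fderiv_apply]
  ring

lemma pd_six_w6 : pd 6 w6 x = x 5 * x 6 := by
  simp [pd, fderiv_w6_apply]

lemma r7B_eq : r7B κ = fun x => x 0 * (x 5 * x 6) + 2 * √2 * x 3 * fK κ x := by
  ext x; exact congrArg (x 0 * · + _) (pd_six_w6 x)

lemma s7B_eq : s7B κ = fun x => x 1 * (x 5 * x 6) + fK κ x * (x 4 + κ⁻¹ * x 2) := by
  ext x; exact congrArg (x 1 * · + _) (pd_six_w6 x)

lemma fderiv_r7B_apply : fderiv ℝ (r7B κ) x v =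
    x 5 * x 6 * v 0 + x 0 * x 6 * v 5 + x 0 * x 5 * v 6
      + 2 * √2 * (fK κ x * v 3 + x 3 * fderiv ℝ (fK κ) x v) := by
  rw [r7B_eq]
  simp (disch := fun_prop) [fderiv_fun_mul, fderiv_fun_add, fderiv_apply]
  ring

lemma fderiv_s7B_apply : fderiv ℝ (s7B κ) x v =
    x 5 * x 6 * v 1 + x 1 * (x 6 * v 5 + x 5 * v 6)
      + fderiv ℝ (fK κ) x v * (x 4 + κ⁻¹ * x 2) + fK κ x * (v 4 + κ⁻¹ * v 2) := by
  rw [s7B_eq]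
  simp (disch := fun_prop) [fderiv_fun_mul, fderiv_fun_add, fderiv_apply]
  ring

lemma fderiv_r6B_apply : fderiv ℝ (r6B κ) x v =
    (fK κ x * v 2 + x 2 * fderiv ℝ (fK κ) x v + x 2 * fK κ x * fderiv ℝ w6 x v) * exp (w6 x)
      + x 4 * v 4 := by
  unfold r6B
  simp only [sq, div_eq_mul_inv]
  simp (disch := fun_prop) [fderiv_fun_mul, fderiv_fun_add, fderiv_apply, fderiv_exp]
  ring

end

/-- the chosen functions satisfy the full PDE system. -/
theorem stmt_15 (κ : ℝ) (hκ : κ = 1 ∨ κ = -1) (x : Fin 7 → ℝ) :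
    pd 0 (r7B κ) x = pd 6 w6 x ∧
    pd 2 (r7B κ) x = Real.sqrt 2 * pd 3 (s7B κ) x ∧
    pd 3 (r7B κ) x = 2 * Real.sqrt 2 * pd 4 (s7B κ) x ∧
    pd 3 (r7B κ) x = 2 * Real.sqrt 2 * pd 2 (r6B κ) x * Real.exp (-(w6 x)) ∧
    pd 4 (r7B κ) x = κ * pd 2 (r7B κ) x ∧
    pd 4 (r7B κ) x = Real.sqrt 2 * pd 3 (r6B κ) x * Real.exp (-(w6 x)) ∧
    pd 1 (s7B κ) x = pd 6 w6 x ∧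
    pd 4 (s7B κ) x = κ * pd 2 (s7B κ) x := by
  have hκ₀ : κ ≠ 0 := by rcases hκ with rfl | rfl <;> norm_num
  simp only [pd, fderiv_r7B_apply, fderiv_s7B_apply, fderiv_r6B_apply, fderiv_fK_apply,
    fderiv_w6_apply, Pi.single_apply]
  norm_num [Fin.ext_iff, exp_neg]
  constructor <;> field_simp
end
end

section
/- Let s ∈ (0,1] and let β ∈ ℝ satisfy 3β² − (s+1)β − s = 0. Then β ≠ 0, and the subspace Z_4(s,β) = {h(0,(s z_1, −β z_4, −β z_1, z_4), c) : z_1, z_4, c ∈ ℝ} is a 3-dimensional Lie subalgebra of 𝔥^{II}. -/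
open Matrix Real

noncomputable section

def Z4set (s β : ℝ) : Set (Matrix (Fin 7) (Fin 7) ℝ) :=
  {m | ∃ z1 z4 c : ℝ, m = hM 0 ![s * z1, -β * z4, -β * z1, z4] c}

section aux
variable {α : Type*}
lemma cv0 (a b c d e f g : α) : ![a,b,c,d,e,f,g] 0 = a := rfl
lemma cv1 (a b c d e f g : α) : ![a,b,c,d,e,f,g] 1 = b := rfl
lemma cv2 (a b c d e f g : α) : ![a,b,c,d,e,f,g] 2 = c := rfl
lemma cv3 (a b c d e f g : α) : ![a,b,c,d,e,f,g] 3 = d := rfl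
lemma cv4 (a b c d e f g : α) : ![a,b,c,d,e,f,g] 4 = e := rfl
lemma cv5 (a b c d e f g : α) : ![a,b,c,d,e,f,g] 5 = f := rfl
lemma cv6 (a b c d e f g : α) : ![a,b,c,d,e,f,g] 6 = g := rfl
lemma mm0 (a b c d e f g : Fin 7 → α) : Matrix.of ![a,b,c,d,e,f,g] 0 = a := rfl
lemma mm1 (a b c d e f g : Fin 7 → α) : Matrix.of ![a,b,c,d,e,f,g] 1 = b := rfl
lemma mm2 (a b c d e f g : Fin 7 → α) : Matrix.of ![a,b,c,d,e,f,g] 2 = c := rfl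
lemma mm3 (a b c d e f g : Fin 7 → α) : Matrix.of ![a,b,c,d,e,f,g] 3 = d := rfl
lemma mm4 (a b c d e f g : Fin 7 → α) : Matrix.of ![a,b,c,d,e,f,g] 4 = e := rfl
lemma mm5 (a b c d e f g : Fin 7 → α) : Matrix.of ![a,b,c,d,e,f,g] 5 = f := rfl
lemma mm6 (a b c d e f g : Fin 7 → α) : Matrix.of ![a,b,c,d,e,f,g] 6 = g := rfl
lemma cw0 (a b c d : α) : ![a,b,c,d] 0 = a := rfl
lemma cw1 (a b c d : α) : ![a,b,c,d] 1 = b := rfl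
lemma cw2 (a b c d : α) : ![a,b,c,d] 2 = c := rfl
lemma cw3 (a b c d : α) : ![a,b,c,d] 3 = d := rfl
lemma cvm0 (a b c d e f g : α) (h : 0 < 7) : ![a,b,c,d,e,f,g] ⟨0,h⟩ = a := rfl
lemma mmm0 (a b c d e f g : Fin 7 → α) (h : 0 < 7) : Matrix.of ![a,b,c,d,e,f,g] ⟨0,h⟩ = a := rfl
lemma cvm1 (a b c d e f g : α) (h : 1 < 7) : ![a,b,c,d,e,f,g] ⟨1,h⟩ = b := rfl
lemma mmm1 (a b c d e f g : Fin 7 → α) (h : 1 < 7) : Matrix.of ![a,b,c,d,e,f,g] ⟨1,h⟩ = b := rfl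
lemma cvm2 (a b c d e f g : α) (h : 2 < 7) : ![a,b,c,d,e,f,g] ⟨2,h⟩ = c := rfl
lemma mmm2 (a b c d e f g : Fin 7 → α) (h : 2 < 7) : Matrix.of ![a,b,c,d,e,f,g] ⟨2,h⟩ = c := rfl
lemma cvm3 (a b c d e f g : α) (h : 3 < 7) : ![a,b,c,d,e,f,g] ⟨3,h⟩ = d := rfl
lemma mmm3 (a b c d e f g : Fin 7 → α) (h : 3 < 7) : Matrix.of ![a,b,c,d,e,f,g] ⟨3,h⟩ = d := rfl
lemma cvm4 (a b c d e f g : α) (h : 4 < 7) : ![a,b,c,d,e,f,g] ⟨4,h⟩ = e := rfl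
lemma mmm4 (a b c d e f g : Fin 7 → α) (h : 4 < 7) : Matrix.of ![a,b,c,d,e,f,g] ⟨4,h⟩ = e := rfl
lemma cvm5 (a b c d e f g : α) (h : 5 < 7) : ![a,b,c,d,e,f,g] ⟨5,h⟩ = f := rfl
lemma mmm5 (a b c d e f g : Fin 7 → α) (h : 5 < 7) : Matrix.of ![a,b,c,d,e,f,g] ⟨5,h⟩ = f := rfl
lemma cvm6 (a b c d e f g : α) (h : 6 < 7) : ![a,b,c,d,e,f,g] ⟨6,h⟩ = g := rfl
lemma mmm6 (a b c d e f g : Fin 7 → α) (h : 6 < 7) : Matrix.of ![a,b,c,d,e,f,g] ⟨6,h⟩ = g := rfl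
lemma sq2 (a b : ℝ) : Real.sqrt 2 * a * (Real.sqrt 2 * b) = 2 * (a * b) := by
  have h2 : Real.sqrt 2 * Real.sqrt 2 = 2 := Real.mul_self_sqrt (by norm_num)
  linear_combination a * b * h2
end aux

set_option maxHeartbeats 1000000 in
lemma bracket_hM (z z' : Fin 4 → ℝ) (c c' : ℝ) :
    hM 0 z c * hM 0 z' c' - hM 0 z' c' * hM 0 z c
      = hM 0 ![0,0,0,0] (3*(z 1 * z' 2 - z 2 * z' 1) + z 3 * z' 0 - z 0 * z' 3) := by
  have h2 : Real.sqrt 2 * Real.sqrt 2 = 2 := Real.mul_self_sqrt (by norm_num)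
  ext i j
  fin_cases i <;> fin_cases j <;>
    simp only [hM, Matrix.sub_apply, Matrix.mul_apply, Fin.sum_univ_seven, Matrix.zero_apply,
      mm0,mm1,mm2,mm3,mm4,mm5,mm6, cv0,cv1,cv2,cv3,cv4,cv5,cv6, cw0,cw1,cw2,cw3, cvm0,cvm1,cvm2,cvm3,cvm4,cvm5,cvm6, mmm0,mmm1,mmm2,mmm3,mmm4,mmm5,mmm6, sq2] <;> ring

set_option maxHeartbeats 1000000 in
lemma combo_hM (s β z1 z4 c : ℝ) :
    hM 0 ![s * z1, -β * z4, -β * z1, z4] c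
      = z1 • hM 0 ![s, 0, -β, 0] 0 + z4 • hM 0 ![0, -β, 0, 1] 0 + c • hM 0 ![0,0,0,0] 1 := by
  ext i j
  fin_cases i <;> fin_cases j <;>
    simp only [hM, Matrix.add_apply, Matrix.smul_apply, smul_eq_mul, Matrix.zero_apply,
      mm0,mm1,mm2,mm3,mm4,mm5,mm6, cv0,cv1,cv2,cv3,cv4,cv5,cv6, cw0,cw1,cw2,cw3,
      cvm0,cvm1,cvm2,cvm3,cvm4,cvm5,cvm6, mmm0,mmm1,mmm2,mmm3,mmm4,mmm5,mmm6] <;> ring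


/-- for s ∈ (0,1] and β a root of 3β² − (s+1)β − s = 0, one has β ≠ 0 and
Z₄(s,β) is a 3-dimensional Lie subalgebra of 𝔥^{II}. -/
theorem stmt_17 (s β : ℝ) (hs0 : 0 < s) (hs1 : s ≤ 1)
    (hβ : 3 * β ^ 2 - (s + 1) * β - s = 0) :
    β ≠ 0 ∧
    (∀ x ∈ Z4set s β, ∀ y ∈ Z4set s β, x * y - y * x ∈ Z4set s β) ∧
    Module.finrank ℝ (Submodule.span ℝ (Z4set s β)) = 3 := by
  have hvec : ∀ a b c d : ℝ, (![a,b,c,d] : Fin 4 → ℝ) = ![a,b,c,d] := fun _ _ _ _ => rfl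
  refine ⟨?_, ?_, ?_⟩
  · rintro rfl
    norm_num at hβ
    linarith
  · rintro x ⟨z1, z4, c, rfl⟩ y ⟨w1, w4, c', rfl⟩
    refine ⟨0, 0, 3*((![s * z1, -β * z4, -β * z1, z4] : Fin 4 → ℝ) 1 * (![s * w1, -β * w4, -β * w1, w4] : Fin 4 → ℝ) 2 - (![s * z1, -β * z4, -β * z1, z4] : Fin 4 → ℝ) 2 * (![s * w1, -β * w4, -β * w1, w4] : Fin 4 → ℝ) 1) + (![s * z1, -β * z4, -β * z1, z4] : Fin 4 → ℝ) 3 * (![s * w1, -β * w4, -β * w1, w4] : Fin 4 → ℝ) 0 - (![s * z1, -β * z4, -β * z1, z4] : Fin 4 → ℝ) 0 * (![s * w1, -β * w4, -β * w1, w4] : Fin 4 → ℝ) 3, ?_⟩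
    rw [bracket_hM]
    congr 1
    funext i
    fin_cases i <;> simp [cw0, cw1, cw2, cw3]
  · set v : Fin 3 → Matrix (Fin 7) (Fin 7) ℝ :=
      ![hM 0 ![s, 0, -β, 0] 0, hM 0 ![0, -β, 0, 1] 0, hM 0 ![0,0,0,0] 1] with hv
    have hspan : Submodule.span ℝ (Z4set s β) = Submodule.span ℝ (Set.range v) := by
      apply le_antisymm
      · rw [Submodule.span_le]
        rintro m ⟨z1, z4, c, rfl⟩
        rw [combo_hM]
        refine Submodule.add_mem _ (Submodule.add_mem _
          (Submodule.smul_mem _ _ (Submodule.subset_span ⟨0, rfl⟩))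
          (Submodule.smul_mem _ _ (Submodule.subset_span ⟨1, rfl⟩)))
          (Submodule.smul_mem _ _ (Submodule.subset_span ⟨2, rfl⟩))
      · rw [Submodule.span_le]
        rintro m ⟨i, rfl⟩
        apply Submodule.subset_span
        fin_cases i
        · exact ⟨1, 0, 0, by norm_num; rfl⟩
        · exact ⟨0, 1, 0, by norm_num; rfl⟩
        · exact ⟨0, 0, 1, by norm_num; rfl⟩
    rw [hspan]
    have li : LinearIndependent ℝ v := by
      rw [Fintype.linearIndependent_iff]
      intro g hg
      rw [Fin.sum_univ_three] at hg
      have h0 : g 0 * s = 0 := by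
        have := congrFun (congrFun hg 1) 2
        simpa [hv, hM, Matrix.add_apply, Matrix.smul_apply, smul_eq_mul, Matrix.zero_apply,
          mm0,mm1,mm2,mm3,mm4,mm5,mm6, cv0,cv1,cv2,cv3,cv4,cv5,cv6, cw0,cw1,cw2,cw3] using this
      have h1 : g 1 = 0 := by
        have := congrFun (congrFun hg 0) 4
        simpa [hv, hM, Matrix.add_apply, Matrix.smul_apply, smul_eq_mul, Matrix.zero_apply,
          mm0,mm1,mm2,mm3,mm4,mm5,mm6, cv0,cv1,cv2,cv3,cv4,cv5,cv6, cw0,cw1,cw2,cw3] using this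
      have h2 : g 2 = 0 := by
        have := congrFun (congrFun hg 1) 5
        simpa [hv, hM, Matrix.add_apply, Matrix.smul_apply, smul_eq_mul, Matrix.zero_apply,
          mm0,mm1,mm2,mm3,mm4,mm5,mm6, cv0,cv1,cv2,cv3,cv4,cv5,cv6, cw0,cw1,cw2,cw3] using this
      have h0' : g 0 = 0 := by
        rcases mul_eq_zero.1 h0 with h | h
        · exact h
        · exact absurd h (ne_of_gt hs0)
      intro i; fin_cases i <;> assumption
    rw [finrank_span_eq_card li]
    simp
end
end
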